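/- arXiv:2603.27403 — 9 statements merged into one kernel-verified Lean document; each statement's English description precedes it below -/
import Mathlib

section
/- Oracle conditional-threshold efficiency (Proposition 1, main inequality): Assume (A1)–(A4) and fix α ∈ (0,1). Let T be a real-valued random variable, let q_α(t) := F_t^{-1}(1−α), and let λ̄ ∈ [0,1] be any constant satisfying E[F_T(λ̄)] = 1−α. Then E[G_T(q_α(T))] ≤ E[G_T(λ̄)]. -/
open MeasureTheory Set

open scoped Classical

/-- Generalized inverse `F_t⁻¹(u) := inf {λ ∈ [0,1] : F t λ ≥ u}`, with the
convention that the infimum of the empty set is `1`. -/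
noncomputable def genInv (F : ℝ → ℝ → ℝ) (t u : ℝ) : ℝ :=
  if ({l : ℝ | l ∈ Set.Icc (0 : ℝ) 1 ∧ u ≤ F t l}).Nonempty then
    sInf {l : ℝ | l ∈ Set.Icc (0 : ℝ) 1 ∧ u ≤ F t l}
  else 1

/-- `C_t(u) := G_t(F_t⁻¹(u))`. -/
noncomputable def accFrac (F G : ℝ → ℝ → ℝ) (t u : ℝ) : ℝ :=
  G t (genInv F t u)

lemma genInv_mem_Icc (F : ℝ → ℝ → ℝ) (t u : ℝ) : genInv F t u ∈ Icc (0 : ℝ) 1 := by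
  unfold genInv
  split_ifs with h
  · obtain ⟨l, hl⟩ := h
    refine ⟨le_csInf ⟨l, hl⟩ fun x hx => hx.1.1, ?_⟩
    exact le_trans (csInf_le ⟨0, fun x hx => hx.1.1⟩ hl) hl.1.2
  · exact ⟨zero_le_one, le_rfl⟩

lemma genInv_apply (F : ℝ → ℝ → ℝ) (t : ℝ) (hmono : StrictMonoOn (F t) (Icc 0 1))
    {lam : ℝ} (hlam : lam ∈ Icc (0 : ℝ) 1) : genInv F t (F t lam) = lam := by
  have hne : ({l : ℝ | l ∈ Set.Icc (0 : ℝ) 1 ∧ F t lam ≤ F t l}).Nonempty :=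
    ⟨lam, hlam, le_rfl⟩
  rw [genInv, if_pos hne]
  apply le_antisymm
  · exact csInf_le ⟨0, fun x hx => hx.1.1⟩ ⟨hlam, le_rfl⟩
  · refine le_csInf hne ?_
    rintro x ⟨hx, hge⟩
    by_contra hlt
    push_neg at hlt
    exact absurd (hmono hx hlam hlt) (not_lt.2 hge)

lemma tangent_line_le {f : ℝ → ℝ} (hf : ConvexOn ℝ (Icc (0 : ℝ) 1) f) {u : ℝ}
    (hu : u ∈ Ioo (0 : ℝ) 1) (hd : DifferentiableAt ℝ f u) {v : ℝ}
    (hv : v ∈ Icc (0 : ℝ) 1) :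
    f u + deriv f u * (v - u) ≤ f v := by
  have huS : u ∈ Icc (0 : ℝ) 1 := Ioo_subset_Icc_self hu
  rcases lt_trichotomy v u with h | h | h
  · have hs := hf.slope_le_deriv hv huS h hd
    rw [slope_def_field, div_le_iff₀ (by linarith : (0:ℝ) < u - v)] at hs
    nlinarith
  · simp [h]
  · have hs := hf.deriv_le_slope huS hv h hd
    rw [slope_def_field, le_div_iff₀ (by linarith : (0:ℝ) < v - u)] at hs
    nlinarith

/-- Chebyshev-type association: two antitone functions of the same random variable,
one of them bounded and the other with mean zero, have nonnegative product mean. -/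
lemma antitone_mul_integral_nonneg {Ω : Type*} [MeasurableSpace Ω] (P : Measure Ω)
    (g h : ℝ → ℝ) (hg : Antitone g) (hh : Antitone h)
    {M : ℝ} (hM : ∀ t, |g t| ≤ M) (T : Ω → ℝ)
    (hinth : Integrable (fun ω => h (T ω)) P)
    (hintgh : Integrable (fun ω => g (T ω) * h (T ω)) P)
    (hmean : ∫ ω, h (T ω) ∂P = 0) :
    0 ≤ ∫ ω, g (T ω) * h (T ω) ∂P := by
  obtain ⟨c, hc⟩ : ∃ c : ℝ, ∀ t, 0 ≤ (g t - c) * h t := by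
    by_cases hA : ∃ a, 0 < h a
    · by_cases hB : ∃ b, h b < 0
      · obtain ⟨b, hb⟩ := hB
        set A : Set ℝ := {t | 0 < h t} with hAdef
        have hlt : ∀ a ∈ A, ∀ b' : ℝ, h b' < 0 → g b' ≤ g a := by
          intro a ha b' hb'
          refine hg (le_of_lt ?_)
          by_contra hba
          push_neg at hba
          exact absurd (lt_of_le_of_lt (hh hba) hb') (not_lt.2 (le_of_lt ha))
        obtain ⟨a0, ha0⟩ := hA
        have hAne : (g '' A).Nonempty := ⟨g a0, a0, ha0, rfl⟩
        have hbdd : BddBelow (g '' A) := by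
          refine ⟨g b, ?_⟩
          rintro x ⟨a, ha, rfl⟩
          exact hlt a ha b hb
        refine ⟨sInf (g '' A), fun t => ?_⟩
        rcases lt_trichotomy (h t) 0 with ht | ht | ht
        · have hle : g t ≤ sInf (g '' A) := by
            refine le_csInf hAne ?_
            rintro x ⟨a, ha, rfl⟩
            exact hlt a ha t ht
          nlinarith
        · simp [ht]
        · have hge : sInf (g '' A) ≤ g t := csInf_le hbdd ⟨t, ht, rfl⟩
          exact mul_nonneg (by linarith) (le_of_lt ht)
      · push_neg at hB
        refine ⟨-M, fun t => ?_⟩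
        have := (abs_le.1 (hM t)).1
        exact mul_nonneg (by linarith) (hB t)
    · push_neg at hA
      refine ⟨M, fun t => ?_⟩
      have := (abs_le.1 (hM t)).2
      nlinarith [hA t]
  have key : 0 ≤ ∫ ω, (g (T ω) - c) * h (T ω) ∂P := integral_nonneg fun ω => hc _
  have expand : ∫ ω, (g (T ω) - c) * h (T ω) ∂P
      = (∫ ω, g (T ω) * h (T ω) ∂P) - c * ∫ ω, h (T ω) ∂P := by
    simp_rw [sub_mul]
    rw [integral_sub hintgh (hinth.const_mul c), integral_const_mul]
  rw [expand, hmean, mul_zero, sub_zero] at key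
  exact key

/-- **Oracle conditional-threshold efficiency (Proposition 1, main inequality).**
Under (A1)–(A4), for any constant `λ̄ ∈ [0,1]` with `E[F_T(λ̄)] = 1 - α`, the oracle
conditional threshold `q_α(T) = F_T⁻¹(1-α)` satisfies
`E[G_T(q_α(T))] ≤ E[G_T(λ̄)]`. -/
theorem oracle_conditional_efficiency
    {Ω : Type*} [MeasurableSpace Ω] (P : Measure Ω) [IsProbabilityMeasure P]
    (F G : ℝ → ℝ → ℝ)
    (hFrange : ∀ t : ℝ, ∀ l ∈ Icc (0 : ℝ) 1, F t l ∈ Icc (0 : ℝ) 1)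
    (hGrange : ∀ t : ℝ, ∀ l ∈ Icc (0 : ℝ) 1, G t l ∈ Icc (0 : ℝ) 1)
    -- (A1)
    (hA1 : ∀ t : ℝ, ContinuousOn (F t) (Icc 0 1) ∧ StrictMonoOn (F t) (Icc 0 1) ∧
      F t 0 = 0 ∧ F t 1 = 1)
    -- (A2)
    (hA2 : ∀ l ∈ Icc (0 : ℝ) 1, Antitone fun t => F t l)
    -- (A3)
    (hA3 : ∀ t : ℝ, ConvexOn ℝ (Icc 0 1) (accFrac F G t) ∧
      ∀ u ∈ Ioo (0 : ℝ) 1, DifferentiableAt ℝ (accFrac F G t) u)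
    -- (A4)
    (hA4 : ∀ u ∈ Ioo (0 : ℝ) 1, Antitone fun t => deriv (accFrac F G t) u)
    (α : ℝ) (hα : α ∈ Ioo (0 : ℝ) 1)
    (T : Ω → ℝ) (hT : Measurable T)
    (lamBar : ℝ) (hlamBar : lamBar ∈ Icc (0 : ℝ) 1)
    (hmean : ∫ ω, F (T ω) lamBar ∂P = 1 - α)
    (hint0 : Integrable (fun ω => F (T ω) lamBar) P)
    (hint1 : Integrable (fun ω => G (T ω) (genInv F (T ω) (1 - α))) P)
    (hint2 : Integrable (fun ω => G (T ω) lamBar) P) :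
    ∫ ω, G (T ω) (genInv F (T ω) (1 - α)) ∂P ≤ ∫ ω, G (T ω) lamBar ∂P := by
  set u₀ : ℝ := 1 - α with hu₀def
  have hu₀ : u₀ ∈ Ioo (0 : ℝ) 1 := ⟨by simp only [hu₀def]; linarith [hα.2],
    by simp only [hu₀def]; linarith [hα.1]⟩
  set g : ℝ → ℝ := fun t => deriv (accFrac F G t) u₀ with hgdef
  set h : ℝ → ℝ := fun t => F t lamBar - u₀ with hhdef
  have hg_anti : Antitone g := hA4 u₀ hu₀
  have hh_anti : Antitone h := fun a b hab => sub_le_sub_right (hA2 lamBar hlamBar hab) _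
  have hCrange : ∀ t v, accFrac F G t v ∈ Icc (0 : ℝ) 1 :=
    fun t v => hGrange t _ (genInv_mem_Icc F t v)
  set M : ℝ := 1 / u₀ + 1 / (1 - u₀) with hMdef
  have hM : ∀ t, |g t| ≤ M := by
    intro t
    have h0 := tangent_line_le (hA3 t).1 hu₀ ((hA3 t).2 u₀ hu₀)
      (left_mem_Icc.mpr zero_le_one)
    have h1 := tangent_line_le (hA3 t).1 hu₀ ((hA3 t).2 u₀ hu₀)
      (right_mem_Icc.mpr zero_le_one)
    have hc0 := hCrange t 0
    have hc1 := hCrange t 1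
    have hcu := hCrange t u₀
    have hu1 : (0:ℝ) < u₀ := hu₀.1
    have hu2 : (0:ℝ) < 1 - u₀ := by linarith [hu₀.2]
    have hd0 : (0:ℝ) ≤ 1 / u₀ := by positivity
    have hd1 : (0:ℝ) ≤ 1 / (1 - u₀) := by positivity
    rw [abs_le]
    constructor
    · have hb : -(g t) * u₀ ≤ 1 := by nlinarith [hc0.2, hcu.1, h0]
      have : -(g t) ≤ 1 / u₀ := by
        rw [le_div_iff₀ hu1]; exact hb
      simp only [hMdef]; linarith
    · have hb : g t * (1 - u₀) ≤ 1 := by nlinarith [hc1.2, hcu.1, h1]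
      have : g t ≤ 1 / (1 - u₀) := by
        rw [le_div_iff₀ hu2]; exact hb
      simp only [hMdef]; linarith
  have hinth : Integrable (fun ω => h (T ω)) P := hint0.sub (integrable_const u₀)
  have hintgh : Integrable (fun ω => g (T ω) * h (T ω)) P := by
    refine hinth.bdd_mul ((hg_anti.measurable.comp hT).aestronglyMeasurable)
      (c := M) (Filter.Eventually.of_forall fun ω => ?_)
    rw [Real.norm_eq_abs]
    exact hM _
  have hmean' : ∫ ω, h (T ω) ∂P = 0 := by
    simp only [hhdef]
    rw [integral_sub hint0 (integrable_const u₀), hmean, integral_const]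
    simp [hu₀def]
  have hcov : 0 ≤ ∫ ω, g (T ω) * h (T ω) ∂P :=
    antitone_mul_integral_nonneg P g h hg_anti hh_anti hM T hinth hintgh hmean'
  have hpt : ∀ ω, G (T ω) (genInv F (T ω) u₀) ≤ G (T ω) lamBar - g (T ω) * h (T ω) := by
    intro ω
    set t := T ω
    have hv : F t lamBar ∈ Icc (0 : ℝ) 1 := hFrange t lamBar hlamBar
    have htan := tangent_line_le (hA3 t).1 hu₀ ((hA3 t).2 u₀ hu₀) hv
    have hCv : accFrac F G t (F t lamBar) = G t lamBar := by
      rw [accFrac, genInv_apply F t (hA1 t).2.1 hlamBar]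
    rw [hCv] at htan
    have hCu : accFrac F G t u₀ = G t (genInv F t u₀) := rfl
    rw [hCu] at htan
    simp only [hgdef, hhdef]
    linarith
  calc ∫ ω, G (T ω) (genInv F (T ω) u₀) ∂P
      ≤ ∫ ω, (G (T ω) lamBar - g (T ω) * h (T ω)) ∂P :=
        integral_mono hint1 (hint2.sub hintgh) hpt
    _ = (∫ ω, G (T ω) lamBar ∂P) - ∫ ω, g (T ω) * h (T ω) ∂P :=
        integral_sub hint2 hintgh
    _ ≤ ∫ ω, G (T ω) lamBar ∂P := by linarith
end

section
/- Oracle conditional-threshold efficiency, strict version (Proposition 1, strictness): Assume (A1)–(A4), fix α ∈ (0,1), let T be a real-valued random variable, q_α(t) := F_t^{-1}(1−α), and let λ̄ ∈ [0,1] satisfy E[F_T(λ̄)] = 1−α. If, in addition, for (law of T)-almost every t the map u ↦ C_t(u) is strictly convex on (0,1), and P(q_α(T) ≠ λ̄) > 0, then E[G_T(q_α(T))] < E[G_T(λ̄)]. -/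
open MeasureTheory Set

open scoped Classical

lemma genInv_leftInv (F : ℝ → ℝ → ℝ) (t : ℝ) (hmono : StrictMonoOn (F t) (Icc 0 1))
    {l : ℝ} (hl : l ∈ Icc (0 : ℝ) 1) : genInv F t (F t l) = l := by
  have hls : IsLeast {l' : ℝ | l' ∈ Set.Icc (0 : ℝ) 1 ∧ F t l ≤ F t l'} l := by
    refine ⟨⟨hl, le_refl _⟩, fun l' hl' => ?_⟩
    by_contra hlt
    push_neg at hlt
    exact absurd hl'.2 (not_le.mpr (hmono hl'.1 hl hlt))
  rw [genInv, if_pos ⟨l, hls.1⟩, hls.csInf_eq]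

lemma genInv_section (F : ℝ → ℝ → ℝ) (t : ℝ) (hcont : ContinuousOn (F t) (Icc 0 1))
    (hmono : StrictMonoOn (F t) (Icc 0 1)) (h0 : F t 0 = 0) (h1 : F t 1 = 1)
    {u : ℝ} (hu : u ∈ Icc (0 : ℝ) 1) :
    genInv F t u ∈ Icc (0 : ℝ) 1 ∧ F t (genInv F t u) = u := by
  have : u ∈ Icc (F t 0) (F t 1) := by rw [h0, h1]; exact hu
  obtain ⟨l, hlmem, hlval⟩ := intermediate_value_Icc (by norm_num : (0:ℝ) ≤ 1) hcont this
  have := genInv_leftInv F t hmono hlmem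
  rw [hlval] at this
  rw [this]
  exact ⟨hlmem, hlval⟩

/-- **Oracle conditional-threshold efficiency, strict version (Proposition 1, strictness).**
Under (A1)–(A4), if moreover `u ↦ C_t(u)` is strictly convex on `(0,1)` for `law(T)`-a.e. `t`
and `P(q_α(T) ≠ λ̄) > 0`, then `E[G_T(q_α(T))] < E[G_T(λ̄)]`. -/
theorem oracle_conditional_efficiency_strict
    {Ω : Type*} [MeasurableSpace Ω] (P : Measure Ω) [IsProbabilityMeasure P]
    (F G : ℝ → ℝ → ℝ)
    (hFrange : ∀ t : ℝ, ∀ l ∈ Icc (0 : ℝ) 1, F t l ∈ Icc (0 : ℝ) 1)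
    (hGrange : ∀ t : ℝ, ∀ l ∈ Icc (0 : ℝ) 1, G t l ∈ Icc (0 : ℝ) 1)
    -- (A1)
    (hA1 : ∀ t : ℝ, ContinuousOn (F t) (Icc 0 1) ∧ StrictMonoOn (F t) (Icc 0 1) ∧
      F t 0 = 0 ∧ F t 1 = 1)
    -- (A2)
    (hA2 : ∀ l ∈ Icc (0 : ℝ) 1, Antitone fun t => F t l)
    -- (A3)
    (hA3 : ∀ t : ℝ, ConvexOn ℝ (Icc 0 1) (accFrac F G t) ∧
      ∀ u ∈ Ioo (0 : ℝ) 1, DifferentiableAt ℝ (accFrac F G t) u)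
    -- (A4)
    (hA4 : ∀ u ∈ Ioo (0 : ℝ) 1, Antitone fun t => deriv (accFrac F G t) u)
    (α : ℝ) (hα : α ∈ Ioo (0 : ℝ) 1)
    (T : Ω → ℝ) (hT : Measurable T)
    (lamBar : ℝ) (hlamBar : lamBar ∈ Icc (0 : ℝ) 1)
    (hmean : ∫ ω, F (T ω) lamBar ∂P = 1 - α)
    (hint0 : Integrable (fun ω => F (T ω) lamBar) P)
    (hint1 : Integrable (fun ω => G (T ω) (genInv F (T ω) (1 - α))) P)
    (hint2 : Integrable (fun ω => G (T ω) lamBar) P)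
    -- strict convexity for (law of T)-a.e. t
    (hstrict : ∀ᵐ t ∂(P.map T), StrictConvexOn ℝ (Ioo (0 : ℝ) 1) (accFrac F G t))
    -- the two thresholds differ with positive probability
    (hdiff : 0 < P {ω | genInv F (T ω) (1 - α) ≠ lamBar}) :
    ∫ ω, G (T ω) (genInv F (T ω) (1 - α)) ∂P < ∫ ω, G (T ω) lamBar ∂P := by
  set u0 : ℝ := 1 - α with hu0def
  clear_value u0
  have hu0pos : (0:ℝ) < u0 := by rw [hu0def]; linarith [hα.2]
  have hu01 : u0 < 1 := by rw [hu0def]; linarith [hα.1]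
  have hu0Ioo : u0 ∈ Ioo (0:ℝ) 1 := ⟨hu0pos, hu01⟩
  have hu0Icc : u0 ∈ Icc (0:ℝ) 1 := ⟨hu0pos.le, hu01.le⟩
  -- per-t facts
  have hq : ∀ t : ℝ, genInv F t u0 ∈ Icc (0:ℝ) 1 ∧ F t (genInv F t u0) = u0 := fun t =>
    genInv_section F t (hA1 t).1 (hA1 t).2.1 (hA1 t).2.2.1 (hA1 t).2.2.2 hu0Icc
  have hCv : ∀ t : ℝ, accFrac F G t (F t lamBar) = G t lamBar := fun t => by
    rw [accFrac, genInv_leftInv F t (hA1 t).2.1 hlamBar]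
  have hCrange : ∀ t : ℝ, ∀ u ∈ Icc (0:ℝ) 1, accFrac F G t u ∈ Icc (0:ℝ) 1 := by
    intro t u hu
    exact hGrange t _ (genInv_section F t (hA1 t).1 (hA1 t).2.1 (hA1 t).2.2.1 (hA1 t).2.2.2 hu).1
  -- support line inequality (non-strict)
  have hsupp : ∀ t : ℝ, ∀ w ∈ Icc (0:ℝ) 1,
      deriv (accFrac F G t) u0 * (w - u0) ≤ accFrac F G t w - accFrac F G t u0 := by
    intro t w hw
    have hdif := (hA3 t).2 u0 hu0Ioo
    rcases lt_trichotomy w u0 with h | h | h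
    · have hs := (hA3 t).1.slope_le_deriv hw hu0Icc h hdif
      rw [slope_def_field, div_le_iff₀ (by linarith)] at hs
      nlinarith [hs]
    · rw [h]; simp
    · have hs := (hA3 t).1.deriv_le_slope hu0Icc hw h hdif
      rw [slope_def_field, le_div_iff₀ (by linarith)] at hs
      nlinarith [hs]
  -- support line inequality (strict, under strict convexity)
  have hstrictsupp : ∀ t : ℝ, StrictConvexOn ℝ (Ioo (0:ℝ) 1) (accFrac F G t) →
      ∀ w ∈ Icc (0:ℝ) 1, w ≠ u0 →
      deriv (accFrac F G t) u0 * (w - u0) < accFrac F G t w - accFrac F G t u0 := by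
    intro t hsc w hw hne
    have hdif := (hA3 t).2 u0 hu0Ioo
    have hcvx := (hA3 t).1
    rcases hne.lt_or_gt with h | h
    · -- w < u0
      have hmIoo : (w + u0)/2 ∈ Ioo (0:ℝ) 1 := ⟨by nlinarith [hw.1], by nlinarith⟩
      have hs := hsc.slope_lt_deriv hmIoo hu0Ioo (by linarith) hdif
      rw [slope_def_field, div_lt_iff₀ (by linarith)] at hs
      have hmid := hcvx.2 hw hu0Icc (by norm_num : (0:ℝ) ≤ 1/2)
        (by norm_num : (0:ℝ) ≤ 1/2) (by norm_num)
      simp only [smul_eq_mul] at hmid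
      have heq : (1/2:ℝ) * w + (1/2) * u0 = (w + u0)/2 := by ring
      rw [heq] at hmid
      have hr : deriv (accFrac F G t) u0 * (u0 - (w + u0)/2)
          = -(deriv (accFrac F G t) u0 * (w - u0))/2 := by ring
      rw [hr] at hs
      linarith
    · -- u0 < w
      have hmIoo : (u0 + w)/2 ∈ Ioo (0:ℝ) 1 := ⟨by nlinarith, by nlinarith [hw.2]⟩
      have hs := hsc.deriv_lt_slope hu0Ioo hmIoo (by linarith) hdif
      rw [slope_def_field, lt_div_iff₀ (by linarith)] at hs
      have hmid := hcvx.2 hu0Icc hw (by norm_num : (0:ℝ) ≤ 1/2)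
        (by norm_num : (0:ℝ) ≤ 1/2) (by norm_num)
      simp only [smul_eq_mul] at hmid
      have heq : (1/2:ℝ) * u0 + (1/2) * w = (u0 + w)/2 := by ring
      rw [heq] at hmid
      have hr : deriv (accFrac F G t) u0 * ((u0 + w)/2 - u0)
          = deriv (accFrac F G t) u0 * (w - u0)/2 := by ring
      rw [hr] at hs
      linarith
  -- uniform bounds on the derivative
  have hDle : ∀ t : ℝ, deriv (accFrac F G t) u0 ≤ 1/(1 - u0) := by
    intro t
    have hs := (hA3 t).1.deriv_le_slope hu0Icc (right_mem_Icc.mpr zero_le_one) hu01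
      ((hA3 t).2 u0 hu0Ioo)
    rw [slope_def_field] at hs
    refine hs.trans ?_
    have h1 := hCrange t 1 (right_mem_Icc.mpr zero_le_one)
    have h2 := hCrange t u0 hu0Icc
    rw [div_le_div_iff₀ (by linarith) (by linarith)]
    nlinarith [h1.2, h2.1]
  have hDge : ∀ t : ℝ, -(1/u0) ≤ deriv (accFrac F G t) u0 := by
    intro t
    have hs := (hA3 t).1.slope_le_deriv (left_mem_Icc.mpr zero_le_one) hu0Icc hu0pos
      ((hA3 t).2 u0 hu0Ioo)
    rw [slope_def_field] at hs
    refine le_trans ?_ hs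
    have h1 := hCrange t 0 (left_mem_Icc.mpr zero_le_one)
    have h2 := hCrange t u0 hu0Icc
    rw [neg_le, ← neg_div, neg_sub, sub_zero]
    rw [div_le_div_iff₀ hu0pos hu0pos]
    nlinarith [h1.2, h2.1]
  -- the comparison constant d
  set Bs : Set ℝ := ((fun t => deriv (accFrac F G t) u0) '' {t : ℝ | F t lamBar < u0})
    ∪ {-(1/u0)} with hBsdef
  have hBne : Bs.Nonempty := ⟨-(1/u0), Or.inr rfl⟩
  have hBbdd : BddAbove Bs := by
    refine ⟨max (1/(1-u0)) (-(1/u0)), ?_⟩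
    rintro x (⟨t, _, rfl⟩ | rfl)
    · exact le_max_of_le_left (hDle t)
    · exact le_max_right _ _
  set d := sSup Bs with hddef
  have hd1 : ∀ t : ℝ, F t lamBar < u0 → deriv (accFrac F G t) u0 ≤ d := fun t ht =>
    le_csSup hBbdd (Or.inl ⟨t, ht, rfl⟩)
  have hd2 : ∀ t : ℝ, u0 < F t lamBar → d ≤ deriv (accFrac F G t) u0 := by
    intro t ht
    refine csSup_le hBne ?_
    rintro x (⟨s, hs, rfl⟩ | rfl)
    · have hts : t ≤ s := by
        by_contra hc
        push_neg at hc
        have := hA2 lamBar hlamBar hc.le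
        simp only at this
        exact absurd (this.trans_lt hs) (not_lt.mpr ht.le)
      exact hA4 u0 hu0Ioo hts
    · exact hDge t
  have hkey : ∀ t : ℝ, d * (F t lamBar - u0) ≤ deriv (accFrac F G t) u0 * (F t lamBar - u0) := by
    intro t
    rcases lt_trichotomy (F t lamBar) u0 with h | h | h
    · exact mul_le_mul_of_nonpos_right (hd1 t h) (by linarith)
    · rw [h]; simp
    · exact mul_le_mul_of_nonneg_right (hd2 t h) (by linarith)
  clear_value d
  -- the nonnegative integrand
  set h : Ω → ℝ := fun ω =>
    G (T ω) lamBar - G (T ω) (genInv F (T ω) u0) - d * (F (T ω) lamBar - u0) with hhdef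
  clear_value h
  have hGq : ∀ t : ℝ, accFrac F G t u0 = G t (genInv F t u0) := fun t => rfl
  have h_nonneg : ∀ ω, 0 ≤ h ω := by
    intro ω
    have h1 := hsupp (T ω) (F (T ω) lamBar) (hFrange (T ω) lamBar hlamBar)
    rw [hCv (T ω), hGq (T ω)] at h1
    have h2 := hkey (T ω)
    simp only [hhdef]
    linarith
  have hint3 : Integrable (fun ω => d * (F (T ω) lamBar - u0)) P :=
    (hint0.sub (integrable_const u0)).const_mul d
  have h_int : Integrable h P := by rw [hhdef]; exact (hint2.sub hint1).sub hint3
  -- a.e. strict convexity along T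
  have hstrict' : ∀ᵐ ω ∂P, StrictConvexOn ℝ (Ioo (0:ℝ) 1) (accFrac F G (T ω)) :=
    ae_of_ae_map hT.aemeasurable hstrict
  have hsub : {ω | genInv F (T ω) u0 ≠ lamBar} ≤ᵐ[P] Function.support h := by
    filter_upwards [hstrict'] with ω hsc hmem
    have hvne : F (T ω) lamBar ≠ u0 := by
      intro hc
      exact hmem (by rw [← hc, genInv_leftInv F (T ω) (hA1 (T ω)).2.1 hlamBar])
    have h1 := hstrictsupp (T ω) hsc (F (T ω) lamBar) (hFrange (T ω) lamBar hlamBar) hvne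
    rw [hCv (T ω), hGq (T ω)] at h1
    have h2 := hkey (T ω)
    have : 0 < h ω := by simp only [hhdef]; linarith
    exact this.ne'
  have hpos : 0 < ∫ ω, h ω ∂P :=
    (integral_pos_iff_support_of_nonneg_ae (Filter.Eventually.of_forall h_nonneg) h_int).2
      (lt_of_lt_of_le hdiff (measure_mono_ae hsub))
  have hI2 : ∫ ω, d * (F (T ω) lamBar - u0) ∂P = 0 := by
    rw [integral_const_mul, integral_sub hint0 (integrable_const u0), hmean, integral_const]
    simp
  have hint4 : Integrable (fun ω => G (T ω) lamBar - G (T ω) (genInv F (T ω) u0)) P :=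
    hint2.sub hint1
  have hI : ∫ ω, h ω ∂P = (∫ ω, G (T ω) lamBar ∂P)
      - (∫ ω, G (T ω) (genInv F (T ω) u0) ∂P) - ∫ ω, d * (F (T ω) lamBar - u0) ∂P := by
    simp only [hhdef]
    rw [integral_sub hint4 hint3, integral_sub hint2 hint1]
  rw [hI, hI2] at hpos
  linarith
end

section
/- Convexity–monotone-perturbation inequality (core of the proof of Proposition 1): Let T be a real-valued random variable on a probability space, let u₀ ∈ (0,1), and for each t ∈ ℝ let C_t : [0,1] → ℝ be convex on [0,1] and differentiable at u₀, with m(t) := C_t'(u₀). Let a : ℝ → ℝ be measurable, nonincreasing, with u₀ + a(t) ∈ [0,1] for every t and E[a(T)] = 0, and suppose m is nonincreasing and that C_T(u₀), C_T(u₀ + a(T)), m(T), a(T), and m(T)·a(T) are integrable. Then E[C_T(u₀ + a(T))] ≥ E[C_T(u₀)]. -/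
open MeasureTheory Set

/-- Tangent line inequality for a convex function. -/
lemma tangent_le {f : ℝ → ℝ} {S : Set ℝ} {x y f' : ℝ} (hf : ConvexOn ℝ S f)
    (hx : x ∈ S) (hy : y ∈ S) (hd : HasDerivAt f f' x) :
    f x + f' * (y - x) ≤ f y := by
  rcases lt_trichotomy x y with h | h | h
  · have := hf.le_slope_of_hasDerivAt hx hy h hd
    rw [slope_def_field, le_div_iff₀ (by linarith)] at this
    linarith
  · simp [h]
  · have := hf.slope_le_of_hasDerivAt hy hx h hd
    rw [slope_def_field] at this
    have hyx : 0 < x - y := by linarith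
    rw [div_le_iff₀ hyx] at this
    nlinarith

/-- **Convexity–monotone-perturbation inequality (core of the proof of Proposition 1).**
If each `C_t` is convex on `[0,1]` with derivative `m t` at the interior point `u₀`, `a` is
nonincreasing with mean zero and `u₀ + a(t) ∈ [0,1]`, and `m` is nonincreasing, then
`E[C_T(u₀ + a(T))] ≥ E[C_T(u₀)]`. -/
theorem convex_monotone_perturbation
    {Ω : Type*} [MeasurableSpace Ω] (P : Measure Ω) [IsProbabilityMeasure P]
    (T : Ω → ℝ) (hT : Measurable T)
    (u₀ : ℝ) (hu₀ : u₀ ∈ Ioo (0 : ℝ) 1)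
    (C : ℝ → ℝ → ℝ) (m a : ℝ → ℝ)
    (hCconv : ∀ t : ℝ, ConvexOn ℝ (Icc 0 1) (C t))
    (hCderiv : ∀ t : ℝ, HasDerivAt (C t) (m t) u₀)
    (ha_meas : Measurable a)
    (ha_anti : Antitone a)
    (ha_range : ∀ t : ℝ, u₀ + a t ∈ Icc (0 : ℝ) 1)
    (ha_mean : ∫ ω, a (T ω) ∂P = 0)
    (hm_anti : Antitone m)
    (hint1 : Integrable (fun ω => C (T ω) u₀) P)
    (hint2 : Integrable (fun ω => C (T ω) (u₀ + a (T ω))) P)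
    (hint3 : Integrable (fun ω => m (T ω)) P)
    (hint4 : Integrable (fun ω => a (T ω)) P)
    (hint5 : Integrable (fun ω => m (T ω) * a (T ω)) P) :
    ∫ ω, C (T ω) u₀ ∂P ≤ ∫ ω, C (T ω) (u₀ + a (T ω)) ∂P := by
  have hu₀' : u₀ ∈ Icc (0:ℝ) 1 := ⟨hu₀.1.le, hu₀.2.le⟩
  -- pointwise tangent inequality
  have htan : ∀ t : ℝ, C t u₀ + m t * a t ≤ C t (u₀ + a t) := by
    intro t
    have := tangent_le (hCconv t) hu₀' (ha_range t) (hCderiv t)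
    simpa using this
  -- not all a > 0
  have hnot_pos : ¬ (∀ t, 0 < a t) := by
    intro h
    have : 0 < ∫ ω, a (T ω) ∂P := by
      rw [integral_pos_iff_support_of_nonneg (fun ω => (h (T ω)).le) hint4]
      have : Function.support (fun ω => a (T ω)) = univ := by
        ext ω; simp [Function.mem_support, (h (T ω)).ne']
      rw [this]
      simp
    rw [ha_mean] at this
    exact lt_irrefl 0 this
  -- not all a < 0
  have hnot_neg : ¬ (∀ t, a t < 0) := by
    intro h
    have h4 : Integrable (fun ω => -a (T ω)) P := hint4.neg
    have : 0 < ∫ ω, -a (T ω) ∂P := by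
      rw [integral_pos_iff_support_of_nonneg (fun ω => by simpa using (h (T ω)).le) h4]
      have : Function.support (fun ω => -a (T ω)) = univ := by
        ext ω; simp [Function.mem_support, (h (T ω)).ne]
      rw [this]
      simp
    rw [integral_neg, ha_mean] at this
    linarith
  -- find c with (m t - c) * a t ≥ 0 for all t
  obtain ⟨c, hc⟩ : ∃ c : ℝ, ∀ t, c * a t ≤ m t * a t := by
    by_cases hpos : ∃ t, 0 < a t
    · by_cases hneg : ∃ t, a t < 0
      · -- both signs occur: use inf of m over {a > 0}
        obtain ⟨t₂, ht₂⟩ := hneg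
        set A : Set ℝ := {t | 0 < a t} with hA
        have hAne : (m '' A).Nonempty := by
          obtain ⟨t, ht⟩ := hpos; exact ⟨m t, t, ht, rfl⟩
        have hbdd : ∀ s ∈ A, ∀ t, a t < 0 → m t ≤ m s := by
          intro s hs t ht
          exact hm_anti (le_of_lt (ha_anti.reflect_lt (by simp only [hA, mem_setOf_eq] at hs; linarith)))
        have hbddBelow : BddBelow (m '' A) := by
          refine ⟨m t₂, ?_⟩
          rintro x ⟨s, hs, rfl⟩
          exact hbdd s hs t₂ ht₂
        refine ⟨sInf (m '' A), fun t => ?_⟩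
        rcases lt_trichotomy (a t) 0 with h | h | h
        · have : m t ≤ sInf (m '' A) := by
            apply le_csInf hAne
            rintro x ⟨s, hs, rfl⟩
            exact hbdd s hs t h
          nlinarith
        · simp [h]
        · have : sInf (m '' A) ≤ m t := csInf_le hbddBelow ⟨t, h, rfl⟩
          nlinarith
      · -- a ≥ 0 everywhere; some a = 0 exists
        push_neg at hneg
        obtain ⟨s₀, hs₀⟩ : ∃ s₀, a s₀ = 0 := by
          by_contra h
          push_neg at h
          exact hnot_pos fun t => lt_of_le_of_ne (hneg t) (Ne.symm (h t))
        refine ⟨m s₀, fun t => ?_⟩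
        rcases eq_or_lt_of_le (hneg t) with h | h
        · simp [← h]
        · have hts : t < s₀ := ha_anti.reflect_lt (by linarith)
          have := hm_anti hts.le
          nlinarith
    · -- a ≤ 0 everywhere; some a = 0 exists
      push_neg at hpos
      obtain ⟨s₀, hs₀⟩ : ∃ s₀, a s₀ = 0 := by
        by_contra h
        push_neg at h
        exact hnot_neg fun t => lt_of_le_of_ne (hpos t) (h t)
      refine ⟨m s₀, fun t => ?_⟩
      rcases eq_or_lt_of_le (hpos t) with h | h
      · simp [h]
      · have hts : s₀ < t := ha_anti.reflect_lt (by linarith)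
        have := hm_anti hts.le
        nlinarith
  -- E[m(T) a(T)] ≥ c * E[a(T)] = 0
  have hma : 0 ≤ ∫ ω, m (T ω) * a (T ω) ∂P := by
    have h1 : ∫ ω, c * a (T ω) ∂P ≤ ∫ ω, m (T ω) * a (T ω) ∂P :=
      integral_mono (hint4.const_mul c) hint5 fun ω => hc (T ω)
    rwa [integral_const_mul, ha_mean, mul_zero] at h1
  calc ∫ ω, C (T ω) u₀ ∂P
      = ∫ ω, C (T ω) u₀ ∂P + ∫ ω, m (T ω) * a (T ω) ∂P - ∫ ω, m (T ω) * a (T ω) ∂P := by ring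
    _ ≤ ∫ ω, C (T ω) u₀ ∂P + ∫ ω, m (T ω) * a (T ω) ∂P := by linarith
    _ = ∫ ω, (C (T ω) u₀ + m (T ω) * a (T ω)) ∂P := (integral_add hint1 hint5).symm
    _ ≤ ∫ ω, C (T ω) (u₀ + a (T ω)) ∂P :=
        integral_mono (hint1.add hint5) hint2 fun ω => htan (T ω)
end

section
/- First-order coverage inequality for quantile regression (deterministic core of Theorem 1): Let n ≥ 1, d ≥ 1, τ ∈ (0,1), let φ_1, …, φ_n ∈ ℝ^d and s_1, …, s_n ∈ ℝ, and suppose β ∈ ℝ^d is a global minimizer of the map β ↦ Σ_{i=1}^n ρ_τ(s_i − φ_i^⊤ β). Then for every γ ∈ ℝ^d such that φ_i^⊤ γ ≥ 0 for all i = 1, …, n, one has Σ_{i=1}^n 1{s_i ≤ φ_i^⊤ β} · (φ_i^⊤ γ) ≥ τ · Σ_{i=1}^n (φ_i^⊤ γ). -/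
open Finset

/-- The pinball (quantile-regression) loss `ρ_τ(u) = u (τ - 1{u < 0})`. -/
noncomputable def pinball (τ u : ℝ) : ℝ :=
  u * (τ - if u < 0 then 1 else 0)

open Filter Topology

/-!
At a minimizer `β`, moving in a direction `γ` with `φ_iᵀγ ≥ 0` lowers every residual
`u_i = s_i - φ_iᵀβ` by `t φ_iᵀγ`. For small `t > 0` no positive residual changes sign, so the
loss changes exactly linearly, with slope `Σ_i φ_iᵀγ (1{u_i ≤ 0} - τ)`; minimality makes this
one-sided derivative nonnegative.
-/

lemma pinball_of_nonneg {τ u : ℝ} (hu : 0 ≤ u) : pinball τ u = τ * u := by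
  simp [pinball, not_lt.2 hu, mul_comm]

lemma pinball_of_nonpos {τ u : ℝ} (hu : u ≤ 0) : pinball τ u = (τ - 1) * u := by
  rcases hu.lt_or_eq with hu | rfl
  · simp [pinball, hu, mul_comm]
  · simp [pinball]

lemma eventually_pinball_sub_mul (τ u : ℝ) {a : ℝ} (ha : 0 ≤ a) :
    ∀ᶠ t in 𝓝[>] 0,
      pinball τ (u - t * a) = pinball τ u + t * ((if u ≤ 0 then a else 0) - τ * a) := by
  by_cases hu : u ≤ 0
  · filter_upwards [self_mem_nhdsWithin] with t (ht : 0 < t)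
    have hut : u - t * a ≤ 0 := by nlinarith
    rw [pinball_of_nonpos hut, pinball_of_nonpos hu, if_pos hu]
    ring
  · have hta : Tendsto (fun t : ℝ => t * a) (𝓝[>] 0) (𝓝 0) := by
      simpa using (tendsto_id.mul_const a).mono_left (nhdsWithin_le_nhds (a := (0 : ℝ)))
    filter_upwards [hta.eventually_le_const (not_le.1 hu)] with t hut
    rw [pinball_of_nonneg (sub_nonneg.2 hut), pinball_of_nonneg (not_le.1 hu).le, if_neg hu]
    ring

lemma le_sum_ite_of_pinball_sum_le {ι : Type*} [Fintype ι] (τ : ℝ) (u a : ι → ℝ)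
    (ha : ∀ i, 0 ≤ a i)
    (hmin : ∀ t > 0, ∑ i, pinball τ (u i) ≤ ∑ i, pinball τ (u i - t * a i)) :
    τ * ∑ i, a i ≤ ∑ i, (if u i ≤ 0 then a i else 0) := by
  obtain ⟨t, hexp, ht⟩ :=
    ((eventually_all.2 fun i => eventually_pinball_sub_mul τ (u i) (ha i)).and
      self_mem_nhdsWithin).exists
  have hsum : ∑ i, pinball τ (u i - t * a i) =
      ∑ i, pinball τ (u i) + t * (∑ i, (if u i ≤ 0 then a i else 0) - τ * ∑ i, a i) := by
    rw [mul_sum _ _ τ, ← sum_sub_distrib, mul_sum, ← sum_add_distrib]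
    exact sum_congr rfl fun i _ => hexp i
  have := hmin t ht
  rw [hsum, le_add_iff_nonneg_right] at this
  linarith [nonneg_of_mul_nonneg_right this ht]

theorem pinball_first_order_coverage_general
    (n d : ℕ)
    (τ : ℝ)
    (φ : Fin n → Fin d → ℝ) (s : Fin n → ℝ) (β : Fin d → ℝ)
    (hmin : ∀ b : Fin d → ℝ,
      ∑ i, pinball τ (s i - ∑ j, φ i j * β j) ≤
        ∑ i, pinball τ (s i - ∑ j, φ i j * b j)) :
    ∀ γ : Fin d → ℝ, (∀ i, 0 ≤ ∑ j, φ i j * γ j) →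
      τ * ∑ i, ∑ j, φ i j * γ j ≤
        ∑ i, (if s i ≤ ∑ j, φ i j * β j then ∑ j, φ i j * γ j else 0) := by
  intro γ hγ
  have hshift (t : ℝ) (i : Fin n) : s i - ∑ j, φ i j * (β j + t * γ j) =
      s i - ∑ j, φ i j * β j - t * ∑ j, φ i j * γ j := by
    simp only [mul_add, sum_add_distrib, mul_sum, mul_left_comm, sub_sub]
  simpa only [sub_nonpos] using
    le_sum_ite_of_pinball_sum_le τ (fun i => s i - ∑ j, φ i j * β j)
      (fun i => ∑ j, φ i j * γ j) hγ fun t _ => by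
        simpa only [hshift] using hmin fun j => β j + t * γ j

/-- **First-order coverage inequality for quantile regression (deterministic core of Thm 1).**
If `β` globally minimizes the empirical pinball loss, then for every direction `γ` with
`φ_iᵀγ ≥ 0` for all `i`, `Σ_i 1{s_i ≤ φ_iᵀβ} (φ_iᵀγ) ≥ τ Σ_i (φ_iᵀγ)`. -/
theorem pinball_first_order_coverage
    (n d : ℕ) (hn : 1 ≤ n) (hd : 1 ≤ d)
    (τ : ℝ) (hτ : τ ∈ Set.Ioo (0 : ℝ) 1)
    (φ : Fin n → Fin d → ℝ) (s : Fin n → ℝ) (β : Fin d → ℝ)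
    (hmin : ∀ b : Fin d → ℝ,
      ∑ i, pinball τ (s i - ∑ j, φ i j * β j) ≤
        ∑ i, pinball τ (s i - ∑ j, φ i j * b j)) :
    ∀ γ : Fin d → ℝ, (∀ i, 0 ≤ ∑ j, φ i j * γ j) →
      τ * ∑ i, ∑ j, φ i j * γ j ≤
        ∑ i, (if s i ≤ ∑ j, φ i j * β j then ∑ j, φ i j * γ j else 0) :=
  pinball_first_order_coverage_general n d τ φ s β hmin
end

section
/- Feature-conditional coverage of augmented quantile regression under exchangeability: Fix N ≥ 1, d ≥ 1, α ∈ (0,1), a measurable space 𝓧, and a measurable feature map Φ : 𝓧 → ℝ^d. Let B : (𝓧 × [0,1])^{N+1} → ℝ^d be a measurable function that is invariant under all permutations of its N+1 arguments and such that for every input ((x_1, s_1), …, (x_{N+1}, s_{N+1})), the vector B((x_i, s_i)_i) is a global minimizer of β ↦ Σ_{i=1}^{N+1} ρ_{1−α}(s_i − Φ(x_i)^⊤ β) over ℝ^d. Let (X_1, S_1), …, (X_{N+1}, S_{N+1}) be random elements of 𝓧 × [0,1] whose joint law is invariant under every permutation of the N+1 indices. Then for every γ ∈ ℝ^d such that f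 := Φ(·)^⊤ γ is nonnegative on 𝓧 and f(X_{N+1}) is integrable, E[f(X_{N+1}) · 1{S_{N+1} ≤ Φ(X_{N+1})^⊤ B((X_1, S_1), …, (X_{N+1}, S_{N+1}))}] ≥ (1−α) · E[f(X_{N+1})]. -/
open MeasureTheory Set Finset

lemma pinball_eq (τ u : ℝ) : pinball τ u = τ * u + max (-u) 0 := by
  unfold pinball
  by_cases h : u < 0
  · rw [if_pos h, max_eq_left (by linarith)]; ring
  · rw [if_neg h, max_eq_right (by push_neg at h; linarith)]; ring

lemma coverage_of_min {n : ℕ} (τ : ℝ) (hτ : 0 < τ)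
    (r f : Fin (n + 1) → ℝ) (hf : ∀ i, 0 ≤ f i)
    (hmin : ∀ t : ℝ, 0 < t →
      ∑ i, pinball τ (r i) ≤ ∑ i, pinball τ (r i - t * f i)) :
    τ * ∑ i, f i ≤ ∑ i, (if r i ≤ 0 then f i else 0) := by
  have hne : (Finset.univ : Finset (Fin (n + 1))).Nonempty := ⟨0, Finset.mem_univ 0⟩
  set g : Fin (n + 1) → ℝ := fun i => if 0 < r i ∧ 0 < f i then r i / f i else 1 with hg
  set t0 := Finset.inf' Finset.univ hne g with ht0def
  have ht0 : 0 < t0 := by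
    rw [ht0def, Finset.lt_inf'_iff]
    intro i _
    simp only [hg]
    split
    · exact div_pos (by tauto) (by tauto)
    · norm_num
  set t := t0 / 2 with htdef
  have ht : 0 < t := by positivity
  have hlt : ∀ i, 0 < r i → t * f i < r i := by
    intro i hr
    rcases lt_or_ge 0 (f i) with hfi | hfi
    · have h1 : t0 ≤ r i / f i := by
        have h2 := Finset.inf'_le (f := g) (b := i) (Finset.mem_univ i)
        rw [hg] at h2
        simp only [if_pos (And.intro hr hfi)] at h2
        exact h2
      have h2 : t0 * f i ≤ r i := by
        have := (le_div_iff₀ hfi).mp h1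
        linarith
      calc t * f i = t0 * f i / 2 := by rw [htdef]; ring
        _ ≤ r i / 2 := by linarith
        _ < r i := by linarith
    · have hfz : f i = 0 := le_antisymm hfi (hf i)
      simpa [hfz] using hr
  have key : ∀ i, pinball τ (r i - t * f i) ≤
      pinball τ (r i) - τ * (t * f i) + t * (if r i ≤ 0 then f i else 0) := by
    intro i
    have htf : 0 ≤ t * f i := mul_nonneg ht.le (hf i)
    rw [pinball_eq, pinball_eq]
    rcases le_or_gt (r i) 0 with hr | hr
    · rw [if_pos hr, max_eq_left (by linarith), max_eq_left (by linarith)]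
      nlinarith
    · rw [if_neg (not_le.mpr hr), max_eq_right (by linarith [hlt i hr]),
        max_eq_right (by linarith)]
      nlinarith
  have hsum := hmin t ht
  have h2 : ∑ i, pinball τ (r i - t * f i) ≤
      ∑ i, pinball τ (r i) - τ * (t * ∑ i, f i) + t * ∑ i, (if r i ≤ 0 then f i else 0) := by
    calc ∑ i, pinball τ (r i - t * f i)
        ≤ ∑ i, (pinball τ (r i) - τ * (t * f i) + t * (if r i ≤ 0 then f i else 0)) :=
          Finset.sum_le_sum fun i _ => key i
      _ = _ := by
          rw [Finset.sum_add_distrib, Finset.sum_sub_distrib, ← Finset.mul_sum,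
            ← Finset.mul_sum, ← Finset.mul_sum]
  have h3 : 0 ≤ t * (∑ i, (if r i ≤ 0 then f i else 0) - τ * ∑ i, f i) := by nlinarith
  have h4 : 0 ≤ ∑ i, (if r i ≤ 0 then f i else 0) - τ * ∑ i, f i :=
    nonneg_of_mul_nonneg_right h3 ht
  linarith

/-- **Feature-conditional coverage of augmented quantile regression under exchangeability.**
If `B` is a permutation-invariant global minimizer of the augmented pinball objective and the
`N+1` data points are exchangeable, then for every `γ` with `f = Φ(·)ᵀγ ≥ 0` and `f(X_{N+1})`
integrable, `E[f(X_{N+1}) 1{S_{N+1} ≤ Φ(X_{N+1})ᵀ B}] ≥ (1-α) E[f(X_{N+1})]`. -/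
theorem augmented_qr_conditional_coverage
    {𝓧 : Type*} [MeasurableSpace 𝓧]
    (N d : ℕ) (hN : 1 ≤ N) (hd : 1 ≤ d)
    (α : ℝ) (hα : α ∈ Set.Ioo (0 : ℝ) 1)
    (Φ : 𝓧 → Fin d → ℝ) (hΦ : Measurable Φ)
    (B : (Fin (N + 1) → 𝓧 × ℝ) → Fin d → ℝ) (hB : Measurable B)
    (hperm : ∀ σ : Equiv.Perm (Fin (N + 1)), ∀ z : Fin (N + 1) → 𝓧 × ℝ, B (z ∘ σ) = B z)
    (hmin : ∀ z : Fin (N + 1) → 𝓧 × ℝ, ∀ b : Fin d → ℝ,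
      ∑ i, pinball (1 - α) ((z i).2 - ∑ j, Φ (z i).1 j * B z j) ≤
        ∑ i, pinball (1 - α) ((z i).2 - ∑ j, Φ (z i).1 j * b j))
    {Ω : Type*} [MeasurableSpace Ω] (P : Measure Ω) [IsProbabilityMeasure P]
    (Z : Fin (N + 1) → Ω → 𝓧 × ℝ) (hZ : ∀ i, Measurable (Z i))
    (hZrange : ∀ i ω, (Z i ω).2 ∈ Icc (0 : ℝ) 1)
    -- exchangeability of (Z_1, ..., Z_{N+1})
    (hexch : ∀ σ : Equiv.Perm (Fin (N + 1)),
      Measure.map (fun ω => fun i => Z (σ i) ω) P = Measure.map (fun ω => fun i => Z i ω) P)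
    (γ : Fin d → ℝ)
    (hf_nonneg : ∀ x : 𝓧, 0 ≤ ∑ j, Φ x j * γ j)
    (hf_int : Integrable (fun ω => ∑ j, Φ (Z (Fin.last N) ω).1 j * γ j) P) :
    (1 - α) * ∫ ω, ∑ j, Φ (Z (Fin.last N) ω).1 j * γ j ∂P ≤
      ∫ ω, (if (Z (Fin.last N) ω).2 ≤ ∑ j, Φ (Z (Fin.last N) ω).1 j * B (fun i => Z i ω) j
        then ∑ j, Φ (Z (Fin.last N) ω).1 j * γ j else 0) ∂P := by
  obtain ⟨hα0, hα1⟩ := hα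
  have hτ0 : (0 : ℝ) < 1 - α := by linarith
  set f : 𝓧 → ℝ := fun x => ∑ j, Φ x j * γ j with hfdef
  have hfmeas : Measurable f := by
    apply Finset.measurable_sum
    intro j _
    exact ((measurable_pi_apply j).comp hΦ).mul_const _
  set W : Ω → (Fin (N + 1) → 𝓧 × ℝ) := fun ω i => Z i ω with hWdef
  have hW : Measurable W := measurable_pi_lambda _ hZ
  set μ : Measure (Fin (N + 1) → 𝓧 × ℝ) := P.map W with hμdef
  set Fi : Fin (N + 1) → (Fin (N + 1) → 𝓧 × ℝ) → ℝ := fun i z => f (z i).1 with hFidef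
  set Gi : Fin (N + 1) → (Fin (N + 1) → 𝓧 × ℝ) → ℝ :=
    fun i z => if (z i).2 ≤ ∑ j, Φ (z i).1 j * B z j then f (z i).1 else 0 with hGidef
  have hFimeas : ∀ i, Measurable (Fi i) := fun i =>
    hfmeas.comp (measurable_fst.comp (measurable_pi_apply i))
  have hGimeas : ∀ i, Measurable (Gi i) := by
    intro i
    apply Measurable.ite _ (hFimeas i) measurable_const
    apply measurableSet_le
    · exact measurable_snd.comp (measurable_pi_apply i)
    · apply Finset.measurable_sum
      intro j _
      exact (((measurable_pi_apply j).comp hΦ).comp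
        (measurable_fst.comp (measurable_pi_apply i))).mul ((measurable_pi_apply j).comp hB)
  have hmeas_perm : ∀ σ : Equiv.Perm (Fin (N + 1)),
      Measurable (fun z : Fin (N + 1) → 𝓧 × ℝ => z ∘ σ) :=
    fun σ => measurable_pi_lambda _ fun i => measurable_pi_apply (σ i)
  have hμσ : ∀ σ : Equiv.Perm (Fin (N + 1)), μ.map (fun z => z ∘ σ) = μ := by
    intro σ
    rw [hμdef, Measure.map_map (hmeas_perm σ) hW]
    have heq : (fun z : Fin (N + 1) → 𝓧 × ℝ => z ∘ σ) ∘ W = fun ω => fun i => Z (σ i) ω := rfl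
    rw [heq, hexch σ]
  have hint_inv : ∀ (g : (Fin (N + 1) → 𝓧 × ℝ) → ℝ), Measurable g →
      ∀ σ : Equiv.Perm (Fin (N + 1)), ∫ z, g (z ∘ σ) ∂μ = ∫ z, g z ∂μ := by
    intro g hg σ
    calc ∫ z, g (z ∘ σ) ∂μ = ∫ z, g z ∂(μ.map (fun z => z ∘ σ)) :=
          (integral_map (hmeas_perm σ).aemeasurable hg.aestronglyMeasurable).symm
      _ = ∫ z, g z ∂μ := by rw [hμσ σ]
  have hintg_inv : ∀ (g : (Fin (N + 1) → 𝓧 × ℝ) → ℝ), Measurable g →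
      ∀ σ : Equiv.Perm (Fin (N + 1)), Integrable g μ → Integrable (fun z => g (z ∘ σ)) μ := by
    intro g hg σ hgi
    have : Integrable g (μ.map (fun z => z ∘ σ)) := by rw [hμσ σ]; exact hgi
    exact (integrable_map_measure hg.aestronglyMeasurable (hmeas_perm σ).aemeasurable).mp this
  set σi : Fin (N + 1) → Equiv.Perm (Fin (N + 1)) := fun i => Equiv.swap i (Fin.last N)
    with hσidef
  have hFcomp : ∀ i, (fun z : Fin (N + 1) → 𝓧 × ℝ => Fi (Fin.last N) (z ∘ σi i)) = Fi i := by
    intro i; funext z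
    simp only [hFidef, hσidef, Function.comp_apply, Equiv.swap_apply_right]
  have hGcomp : ∀ i, (fun z : Fin (N + 1) → 𝓧 × ℝ => Gi (Fin.last N) (z ∘ σi i)) = Gi i := by
    intro i; funext z
    have hBz : B (z ∘ σi i) = B z := hperm _ z
    simp only [hGidef, Function.comp_apply, hBz, hσidef, Equiv.swap_apply_right, hperm]
  -- integrability
  have hFlast_int : Integrable (Fi (Fin.last N)) μ := by
    rw [hμdef]
    exact (integrable_map_measure (hFimeas _).aestronglyMeasurable hW.aemeasurable).mpr hf_int
  have hFi_int : ∀ i, Integrable (Fi i) μ := by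
    intro i
    rw [← hFcomp i]
    exact hintg_inv _ (hFimeas _) _ hFlast_int
  have hGi_int : ∀ i, Integrable (Gi i) μ := by
    intro i
    refine (hFi_int i).mono (hGimeas i).aestronglyMeasurable ?_
    refine Filter.Eventually.of_forall fun z => ?_
    simp only [hGidef, hFidef, Real.norm_eq_abs]
    split
    · exact le_rfl
    · rw [abs_zero]; exact abs_nonneg _
  have hFi_eq : ∀ i, ∫ z, Fi i z ∂μ = ∫ z, Fi (Fin.last N) z ∂μ := by
    intro i; rw [← hFcomp i]; exact hint_inv _ (hFimeas _) _
  have hGi_eq : ∀ i, ∫ z, Gi i z ∂μ = ∫ z, Gi (Fin.last N) z ∂μ := by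
    intro i; rw [← hGcomp i]; exact hint_inv _ (hGimeas _) _
  -- pointwise inequality
  have hpt : ∀ z : Fin (N + 1) → 𝓧 × ℝ,
      (1 - α) * ∑ i, Fi i z ≤ ∑ i, Gi i z := by
    intro z
    have hsplit : ∀ (x : 𝓧) (t : ℝ),
        ∑ j, Φ x j * (B z j + t * γ j) = (∑ j, Φ x j * B z j) + t * ∑ j, Φ x j * γ j := by
      intro x t
      rw [Finset.mul_sum, ← Finset.sum_add_distrib]
      exact Finset.sum_congr rfl fun j _ => by ring
    have hkey := coverage_of_min (n := N) (1 - α) hτ0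
      (fun i => (z i).2 - ∑ j, Φ (z i).1 j * B z j)
      (fun i => f (z i).1) (fun i => hf_nonneg _) ?_
    · calc (1 - α) * ∑ i, Fi i z
          = (1 - α) * ∑ i, f (z i).1 := rfl
        _ ≤ ∑ i, (if (z i).2 - ∑ j, Φ (z i).1 j * B z j ≤ 0 then f (z i).1 else 0) := hkey
        _ = ∑ i, Gi i z := by
            refine Finset.sum_congr rfl fun i _ => ?_
            simp only [hGidef, sub_nonpos]
    · intro t ht
      have h := hmin z (fun j => B z j + t * γ j)
      calc ∑ i, pinball (1 - α) ((z i).2 - ∑ j, Φ (z i).1 j * B z j)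
          ≤ ∑ i, pinball (1 - α) ((z i).2 - ∑ j, Φ (z i).1 j * (B z j + t * γ j)) := h
        _ = ∑ i, pinball (1 - α)
              (((z i).2 - ∑ j, Φ (z i).1 j * B z j) - t * f (z i).1) := by
            refine Finset.sum_congr rfl fun i _ => ?_
            rw [hsplit]
            ring_nf
            rfl
  -- integrate
  have hsum_int_F : Integrable (fun z => ∑ i, Fi i z) μ :=
    integrable_finset_sum _ fun i _ => hFi_int i
  have hsum_int_G : Integrable (fun z => ∑ i, Gi i z) μ :=
    integrable_finset_sum _ fun i _ => hGi_int i
  have hIntineq : ∫ z, (1 - α) * ∑ i, Fi i z ∂μ ≤ ∫ z, ∑ i, Gi i z ∂μ :=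
    integral_mono (hsum_int_F.const_mul _) hsum_int_G hpt
  have hL2 : ∫ z, (1 - α) * ∑ i, Fi i z ∂μ
      = (1 - α) * ((N + 1 : ℝ) * ∫ z, Fi (Fin.last N) z ∂μ) := by
    rw [integral_const_mul, integral_finset_sum _ fun i _ => hFi_int i]
    congr 1
    rw [Finset.sum_congr rfl fun i _ => hFi_eq i, Finset.sum_const, Finset.card_univ,
      Fintype.card_fin]
    simp [nsmul_eq_mul]
  have hR2 : ∫ z, ∑ i, Gi i z ∂μ = (N + 1 : ℝ) * ∫ z, Gi (Fin.last N) z ∂μ := by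
    rw [integral_finset_sum _ fun i _ => hGi_int i]
    rw [Finset.sum_congr rfl fun i _ => hGi_eq i, Finset.sum_const, Finset.card_univ,
      Fintype.card_fin]
    simp [nsmul_eq_mul]
  have hNpos : (0 : ℝ) < (N + 1 : ℝ) := by positivity
  have hfinal : (1 - α) * ∫ z, Fi (Fin.last N) z ∂μ ≤ ∫ z, Gi (Fin.last N) z ∂μ := by
    rw [hL2, hR2] at hIntineq
    nlinarith [hIntineq, hNpos]
  have hL : ∫ ω, ∑ j, Φ (Z (Fin.last N) ω).1 j * γ j ∂P = ∫ z, Fi (Fin.last N) z ∂μ := by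
    rw [hμdef, integral_map hW.aemeasurable (hFimeas _).aestronglyMeasurable]
  have hR : ∫ ω, (if (Z (Fin.last N) ω).2 ≤
        ∑ j, Φ (Z (Fin.last N) ω).1 j * B (fun i => Z i ω) j
      then ∑ j, Φ (Z (Fin.last N) ω).1 j * γ j else 0) ∂P
      = ∫ z, Gi (Fin.last N) z ∂μ := by
    rw [hμdef, integral_map hW.aemeasurable (hGimeas _).aestronglyMeasurable]
  rw [hL, hR]
  exact hfinal
end

section
/- Conditional coverage of the CFC fixed-point threshold (Theorem 1): Fix N ≥ 1, d ≥ 1, α ∈ (0,1), a measurable space 𝓧, and a measurable feature map Φ : 𝓧 → ℝ^d. Let B : (𝓧 × [0,1])^{N+1} → ℝ^d be a measurable function that is invariant under all permutations of its N+1 arguments and such that for every input ((x_1, s_1), …, (x_{N+1}, s_{N+1})), the vector B((x_i, s_i)_i) is a global minimizer of β ↦ Σ_{i=1}^{N+1} ρ_{1−α}(s_i − Φ(x_i)^⊤ β) over ℝ^d. For calibration points (x_1, s_1), …, (x_N, s_N) ∈ 𝓧 × [0,1] and a test point x ∈ 𝓧, define the CFC threshold λ̂(x) := sup{s ∈ [0,1]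 : s ≤ Φ(x)^⊤ B((x_1, s_1), …, (x_N, s_N), (x, s))}, with the convention sup ∅ := −1. Let (X_1, S_1), …, (X_{N+1}, S_{N+1}) be random elements of 𝓧 × [0,1] whose joint law is invariant under every permutation of the N+1 indices, and assume that the event {S_{N+1} ≤ λ̂(X_{N+1})}, where λ̂ is built from the calibration pairs (X_i, S_i)_{i ≤ N}, is measurable. Then for every γ ∈ ℝ^d such that f := Φ(·)^⊤ γ is nonnegative on 𝓧 and f(X_{N+1}) is integrable with E[f(X_{N+1})] > 0, one has E[f(X_{N+1}) · 1{S_{N+1} ≤ λ̂(X_{N+1})}] ≥ (1−α) · E[f(X_{N+1})]; equivalently, the f-reweighted probability P_f(S_{N+1} ≤ λ̂(X_{N+1})) := E[f(X_{N+1}) 1{S_{N+1} ≤ λ̂(X_{N+1})}] / E[f(X_{N+1})] is at least 1−α. -/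
open MeasureTheory Set Finset

open scoped Classical

/-- The CFC fixed-point threshold
`λ̂(x) := sup {s ∈ [0,1] : s ≤ Φ(x)ᵀ B((x₁,s₁),…,(x_N,s_N),(x,s))}`,
with the convention `sup ∅ := -1`. -/
noncomputable def cfcThreshold {𝓧 : Type*} (N d : ℕ)
    (Φ : 𝓧 → Fin d → ℝ) (B : (Fin (N + 1) → 𝓧 × ℝ) → Fin d → ℝ)
    (cal : Fin N → 𝓧 × ℝ) (x : 𝓧) : ℝ :=
  if ({s : ℝ | s ∈ Set.Icc (0 : ℝ) 1 ∧
      s ≤ ∑ j, Φ x j * B (Fin.snoc cal (x, s)) j}).Nonempty then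
    sSup {s : ℝ | s ∈ Set.Icc (0 : ℝ) 1 ∧
      s ≤ ∑ j, Φ x j * B (Fin.snoc cal (x, s)) j}
  else -1

lemma pinball_shift (τ u v : ℝ) (hv : 0 ≤ v) (huv : 0 < u → v ≤ u) :
    pinball τ (u - v) = pinball τ u - v * (τ - if u ≤ 0 then 1 else 0) := by
  unfold pinball
  rcases lt_trichotomy u 0 with h | h | h
  · rw [if_pos (by linarith : u - v < 0), if_pos h, if_pos h.le]; ring
  · subst h
    rw [if_pos le_rfl]
    rcases eq_or_lt_of_le hv with hv0 | hv0
    · rw [← hv0]; norm_num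
    · rw [if_pos (by linarith : (0:ℝ) - v < 0), if_neg (lt_irrefl (0:ℝ))]; ring
  · rw [if_neg (by linarith [huv h] : ¬ u - v < 0), if_neg (not_lt.mpr h.le),
      if_neg (not_le.mpr h)]; ring

lemma keyA {𝓧 : Type*} {N d : ℕ} (τ : ℝ) (hτ : 0 < τ)
    (Φ : 𝓧 → Fin d → ℝ) (B : (Fin (N + 1) → 𝓧 × ℝ) → Fin d → ℝ) (γ : Fin d → ℝ)
    (hγ : ∀ x, 0 ≤ ∑ j, Φ x j * γ j) (z : Fin (N + 1) → 𝓧 × ℝ)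
    (hmin : ∀ b : Fin d → ℝ,
      ∑ i, pinball τ ((z i).2 - ∑ j, Φ (z i).1 j * B z j) ≤
        ∑ i, pinball τ ((z i).2 - ∑ j, Φ (z i).1 j * b j)) :
    τ * ∑ i, (∑ j, Φ (z i).1 j * γ j) ≤
      ∑ i, (if (z i).2 ≤ ∑ j, Φ (z i).1 j * B z j then ∑ j, Φ (z i).1 j * γ j else 0) := by
  classical
  set u : Fin (N + 1) → ℝ := fun i => (z i).2 - ∑ j, Φ (z i).1 j * B z j with hu
  set a : Fin (N + 1) → ℝ := fun i => ∑ j, Φ (z i).1 j * γ j with ha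
  have huu : ∀ i, u i = (z i).2 - ∑ j, Φ (z i).1 j * B z j := fun i => rfl
  have haa : ∀ i, a i = ∑ j, Φ (z i).1 j * γ j := fun i => rfl
  have ha0 : ∀ i, 0 ≤ a i := fun i => hγ _
  obtain ⟨t, ht, htu⟩ : ∃ t : ℝ, 0 < t ∧ ∀ i, 0 < u i → t * a i ≤ u i := by
    by_cases hS : (Finset.univ.filter fun i => 0 < u i ∧ 0 < a i).Nonempty
    · refine ⟨(Finset.univ.filter fun i => 0 < u i ∧ 0 < a i).inf' hS (fun i => u i / a i),
        ?_, ?_⟩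
      · rw [Finset.lt_inf'_iff]
        intro i hi
        rw [Finset.mem_filter] at hi
        exact div_pos hi.2.1 hi.2.2
      · intro i hui
        rcases (ha0 i).lt_or_eq with hai | hai
        · have hmem : i ∈ Finset.univ.filter fun i => 0 < u i ∧ 0 < a i :=
            Finset.mem_filter.mpr ⟨Finset.mem_univ i, hui, hai⟩
          have hle : (Finset.univ.filter fun i => 0 < u i ∧ 0 < a i).inf' hS
              (fun i => u i / a i) ≤ u i / a i := Finset.inf'_le _ hmem
          have h2 := mul_le_mul_of_nonneg_right hle hai.le
          rwa [div_mul_cancel₀ _ (ne_of_gt hai)] at h2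
        · rw [← hai, mul_zero]; exact hui.le
    · refine ⟨1, one_pos, fun i hui => ?_⟩
      have h1 : ¬ (0 < a i) := fun hai =>
        hS ⟨i, Finset.mem_filter.mpr ⟨Finset.mem_univ i, hui, hai⟩⟩
      have h2 : a i = 0 := le_antisymm (not_lt.mp h1) (ha0 i)
      rw [h2, mul_zero]; exact hui.le
  have hrw : ∀ i : Fin (N + 1),
      (z i).2 - ∑ j, Φ (z i).1 j * (B z j + t * γ j) = u i - t * a i := by
    intro i
    have he : ∑ j, Φ (z i).1 j * (B z j + t * γ j)
        = (∑ j, Φ (z i).1 j * B z j) + t * ∑ j, Φ (z i).1 j * γ j := by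
      rw [Finset.mul_sum, ← Finset.sum_add_distrib]
      exact Finset.sum_congr rfl fun j _ => by ring
    rw [he, huu i, haa i]; ring
  have hb' : ∑ i, pinball τ (u i) ≤ ∑ i, pinball τ (u i - t * a i) := by
    calc ∑ i, pinball τ (u i)
        = ∑ i, pinball τ ((z i).2 - ∑ j, Φ (z i).1 j * B z j) :=
          Finset.sum_congr rfl fun i _ => by rw [huu i]
      _ ≤ ∑ i, pinball τ ((z i).2 - ∑ j, Φ (z i).1 j * (B z j + t * γ j)) :=
          hmin _
      _ = ∑ i, pinball τ (u i - t * a i) :=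
          Finset.sum_congr rfl fun i _ => by rw [hrw i]
  have hb2 : ∑ i, pinball τ (u i - t * a i)
      = ∑ i, pinball τ (u i) - t * ∑ i, a i * (τ - if u i ≤ 0 then 1 else 0) := by
    rw [Finset.mul_sum, ← Finset.sum_sub_distrib]
    refine Finset.sum_congr rfl fun i _ => ?_
    rw [pinball_shift τ (u i) (t * a i) (mul_nonneg ht.le (ha0 i)) (htu i)]
    ring
  have hb3 : ∑ i, a i * (τ - if u i ≤ 0 then 1 else 0) ≤ 0 := by
    rw [hb2] at hb'
    nlinarith
  have hexpand : ∑ i, a i * (τ - if u i ≤ 0 then 1 else 0)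
      = τ * ∑ i, a i - ∑ i, a i * (if u i ≤ 0 then 1 else 0) := by
    rw [Finset.mul_sum, ← Finset.sum_sub_distrib]
    exact Finset.sum_congr rfl fun i _ => by ring
  have hfinal : τ * ∑ i, a i ≤ ∑ i, a i * (if u i ≤ 0 then 1 else 0) := by
    rw [hexpand] at hb3; linarith
  calc τ * ∑ i, (∑ j, Φ (z i).1 j * γ j) = τ * ∑ i, a i := rfl
    _ ≤ ∑ i, a i * (if u i ≤ 0 then 1 else 0) := hfinal
    _ = ∑ i, (if (z i).2 ≤ ∑ j, Φ (z i).1 j * B z j then ∑ j, Φ (z i).1 j * γ j else 0) := by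
        refine Finset.sum_congr rfl fun i _ => ?_
        rw [mul_ite, mul_one, mul_zero, haa i]
        exact if_congr (by rw [huu i]; exact sub_nonpos) rfl rfl

lemma le_cfcThreshold {𝓧 : Type*} {N d : ℕ} (Φ : 𝓧 → Fin d → ℝ)
    (B : (Fin (N + 1) → 𝓧 × ℝ) → Fin d → ℝ) (cal : Fin N → 𝓧 × ℝ) (x : 𝓧) (s : ℝ)
    (hs : s ∈ Set.Icc (0:ℝ) 1) (h : s ≤ ∑ j, Φ x j * B (Fin.snoc cal (x, s)) j) :
    s ≤ cfcThreshold N d Φ B cal x := by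
  have hmem : s ∈ {s : ℝ | s ∈ Set.Icc (0:ℝ) 1 ∧
      s ≤ ∑ j, Φ x j * B (Fin.snoc cal (x, s)) j} := ⟨hs, h⟩
  rw [cfcThreshold, if_pos ⟨s, hmem⟩]
  exact le_csSup ⟨1, fun y hy => hy.1.2⟩ hmem

noncomputable def auxF {𝓧 : Type*} (N d : ℕ) (Φ : 𝓧 → Fin d → ℝ) (γ : Fin d → ℝ)
    (w : Fin (N + 1) → 𝓧 × ℝ) : ℝ :=
  ∑ j, Φ (w (Fin.last N)).1 j * γ j

noncomputable def auxH {𝓧 : Type*} (N d : ℕ) (Φ : 𝓧 → Fin d → ℝ)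
    (B : (Fin (N + 1) → 𝓧 × ℝ) → Fin d → ℝ) (γ : Fin d → ℝ)
    (w : Fin (N + 1) → 𝓧 × ℝ) : ℝ :=
  if (w (Fin.last N)).2 ≤ ∑ j, Φ (w (Fin.last N)).1 j * B w j then auxF N d Φ γ w else 0

lemma measurable_auxF {𝓧 : Type*} [MeasurableSpace 𝓧] (N d : ℕ)
    (Φ : 𝓧 → Fin d → ℝ) (hΦ : Measurable Φ) (γ : Fin d → ℝ) :
    Measurable (auxF N d Φ γ) := by
  apply Finset.measurable_sum
  intro j _
  exact ((measurable_pi_apply j).comp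
    (hΦ.comp ((measurable_pi_apply (Fin.last N)).fst))).mul_const _

lemma measurable_auxH {𝓧 : Type*} [MeasurableSpace 𝓧] (N d : ℕ)
    (Φ : 𝓧 → Fin d → ℝ) (hΦ : Measurable Φ)
    (B : (Fin (N + 1) → 𝓧 × ℝ) → Fin d → ℝ) (hB : Measurable B) (γ : Fin d → ℝ) :
    Measurable (auxH N d Φ B γ) := by
  apply Measurable.ite _ (measurable_auxF N d Φ hΦ γ) measurable_const
  apply measurableSet_le
  · exact (measurable_pi_apply (Fin.last N)).snd
  · apply Finset.measurable_sum
    intro j _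
    exact ((measurable_pi_apply j).comp
      (hΦ.comp ((measurable_pi_apply (Fin.last N)).fst))).mul
      ((measurable_pi_apply j).comp hB)

/-- **Conditional coverage of the CFC fixed-point threshold (Theorem 1).**
Under exchangeability, for every `γ` with `f = Φ(·)ᵀγ ≥ 0`, `f(X_{N+1})` integrable and
`E[f(X_{N+1})] > 0`, the CFC threshold satisfies
`E[f(X_{N+1}) 1{S_{N+1} ≤ λ̂(X_{N+1})}] ≥ (1-α) E[f(X_{N+1})]`, equivalently the
`f`-reweighted coverage probability is at least `1-α`. -/
theorem cfc_conditional_coverage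
    {𝓧 : Type*} [MeasurableSpace 𝓧]
    (N d : ℕ) (hN : 1 ≤ N) (hd : 1 ≤ d)
    (α : ℝ) (hα : α ∈ Set.Ioo (0 : ℝ) 1)
    (Φ : 𝓧 → Fin d → ℝ) (hΦ : Measurable Φ)
    (B : (Fin (N + 1) → 𝓧 × ℝ) → Fin d → ℝ) (hB : Measurable B)
    (hperm : ∀ σ : Equiv.Perm (Fin (N + 1)), ∀ z : Fin (N + 1) → 𝓧 × ℝ, B (z ∘ σ) = B z)
    (hmin : ∀ z : Fin (N + 1) → 𝓧 × ℝ, ∀ b : Fin d → ℝ,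
      ∑ i, pinball (1 - α) ((z i).2 - ∑ j, Φ (z i).1 j * B z j) ≤
        ∑ i, pinball (1 - α) ((z i).2 - ∑ j, Φ (z i).1 j * b j))
    {Ω : Type*} [MeasurableSpace Ω] (P : Measure Ω) [IsProbabilityMeasure P]
    (Z : Fin (N + 1) → Ω → 𝓧 × ℝ) (hZ : ∀ i, Measurable (Z i))
    (hZrange : ∀ i ω, (Z i ω).2 ∈ Icc (0 : ℝ) 1)
    -- exchangeability of (Z_1, ..., Z_{N+1})
    (hexch : ∀ σ : Equiv.Perm (Fin (N + 1)),
      Measure.map (fun ω => fun i => Z (σ i) ω) P = Measure.map (fun ω => fun i => Z i ω) P)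
    -- measurability of the coverage event
    (hev : MeasurableSet {ω | (Z (Fin.last N) ω).2 ≤
      cfcThreshold N d Φ B (fun i : Fin N => Z i.castSucc ω) (Z (Fin.last N) ω).1})
    (γ : Fin d → ℝ)
    (hf_nonneg : ∀ x : 𝓧, 0 ≤ ∑ j, Φ x j * γ j)
    (hf_int : Integrable (fun ω => ∑ j, Φ (Z (Fin.last N) ω).1 j * γ j) P)
    (hf_pos : 0 < ∫ ω, ∑ j, Φ (Z (Fin.last N) ω).1 j * γ j ∂P) :
    (1 - α) * ∫ ω, ∑ j, Φ (Z (Fin.last N) ω).1 j * γ j ∂P ≤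
        (∫ ω, (if (Z (Fin.last N) ω).2 ≤
            cfcThreshold N d Φ B (fun i : Fin N => Z i.castSucc ω) (Z (Fin.last N) ω).1
          then ∑ j, Φ (Z (Fin.last N) ω).1 j * γ j else 0) ∂P) ∧
      1 - α ≤
        (∫ ω, (if (Z (Fin.last N) ω).2 ≤
            cfcThreshold N d Φ B (fun i : Fin N => Z i.castSucc ω) (Z (Fin.last N) ω).1
          then ∑ j, Φ (Z (Fin.last N) ω).1 j * γ j else 0) ∂P) /
          (∫ ω, ∑ j, Φ (Z (Fin.last N) ω).1 j * γ j ∂P) := by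
  classical
  obtain ⟨hα0, hα1⟩ := hα
  have hτ : 0 < 1 - α := by linarith
  have hWm : Measurable (fun ω => fun k => Z k ω) := measurable_pi_lambda _ hZ
  have hFm := measurable_auxF N d Φ hΦ γ
  have hHm := measurable_auxH N d Φ hΦ B hB γ
  -- exchangeability transfer for integrals
  have key_int : ∀ (G : (Fin (N + 1) → 𝓧 × ℝ) → ℝ), Measurable G →
      ∀ σ : Equiv.Perm (Fin (N + 1)),
      ∫ ω, G (fun k => Z (σ k) ω) ∂P = ∫ ω, G (fun k => Z k ω) ∂P := by
    intro G hG σ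
    have hV : Measurable (fun ω => fun k => Z (σ k) ω) :=
      measurable_pi_lambda _ fun k => hZ (σ k)
    calc ∫ ω, G (fun k => Z (σ k) ω) ∂P
        = ∫ w, G w ∂(Measure.map (fun ω => fun k => Z (σ k) ω) P) :=
          (integral_map hV.aemeasurable hG.aestronglyMeasurable).symm
      _ = ∫ w, G w ∂(Measure.map (fun ω => fun k => Z k ω) P) := by rw [hexch σ]
      _ = ∫ ω, G (fun k => Z k ω) ∂P :=
          integral_map hWm.aemeasurable hG.aestronglyMeasurable
  have key_intble : ∀ (G : (Fin (N + 1) → 𝓧 × ℝ) → ℝ), Measurable G →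
      Integrable (fun ω => G (fun k => Z k ω)) P →
      ∀ σ : Equiv.Perm (Fin (N + 1)),
      Integrable (fun ω => G (fun k => Z (σ k) ω)) P := by
    intro G hG hGW σ
    have hV : Measurable (fun ω => fun k => Z (σ k) ω) :=
      measurable_pi_lambda _ fun k => hZ (σ k)
    have h1 : Integrable G (Measure.map (fun ω => fun k => Z k ω) P) :=
      (integrable_map_measure hG.aestronglyMeasurable hWm.aemeasurable).mpr hGW
    rw [← hexch σ] at h1
    exact (integrable_map_measure hG.aestronglyMeasurable hV.aemeasurable).mp h1
  -- pointwise identification of permuted terms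
  have hBperm : ∀ σ : Equiv.Perm (Fin (N + 1)), ∀ ω,
      B (fun k => Z (σ k) ω) = B (fun k => Z k ω) := fun σ ω => hperm σ (fun k => Z k ω)
  have hFe : ∀ (i : Fin (N + 1)) ω,
      auxF N d Φ γ (fun k => Z ((Equiv.swap i (Fin.last N)) k) ω)
        = ∑ j, Φ (Z i ω).1 j * γ j := by
    intro i ω
    simp [auxF, Equiv.swap_apply_right]
  have hHe : ∀ (i : Fin (N + 1)) ω,
      auxH N d Φ B γ (fun k => Z ((Equiv.swap i (Fin.last N)) k) ω)
        = if (Z i ω).2 ≤ ∑ j, Φ (Z i ω).1 j * B (fun k => Z k ω) j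
          then ∑ j, Φ (Z i ω).1 j * γ j else 0 := by
    intro i ω
    simp only [auxH, auxF, hBperm, Equiv.swap_apply_right]
  -- integrability of the basic pieces
  have hFW_int : Integrable (fun ω => auxF N d Φ γ (fun k => Z k ω)) P := hf_int
  have hHW_int : Integrable (fun ω => auxH N d Φ B γ (fun k => Z k ω)) P := by
    refine hFW_int.mono' (hHm.comp hWm).aestronglyMeasurable (ae_of_all _ fun ω => ?_)
    simp only [auxH, Real.norm_eq_abs]
    split_ifs with h
    · exact le_of_eq (abs_of_nonneg (hf_nonneg _))
    · simpa [auxF] using hf_nonneg (((fun k => Z k ω) (Fin.last N)).1)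
  -- Step A integrated
  have hptA : ∀ ω,
      (1 - α) * ∑ i, auxF N d Φ γ (fun k => Z ((Equiv.swap i (Fin.last N)) k) ω)
        ≤ ∑ i, auxH N d Φ B γ (fun k => Z ((Equiv.swap i (Fin.last N)) k) ω) := by
    intro ω
    have h := keyA (1 - α) hτ Φ B γ hf_nonneg (fun k => Z k ω) (hmin (fun k => Z k ω))
    calc (1 - α) * ∑ i, auxF N d Φ γ (fun k => Z ((Equiv.swap i (Fin.last N)) k) ω)
        = (1 - α) * ∑ i, (∑ j, Φ (Z i ω).1 j * γ j) := by
          rw [Finset.sum_congr rfl fun i _ => hFe i ω]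
      _ ≤ ∑ i, (if (Z i ω).2 ≤ ∑ j, Φ (Z i ω).1 j * B (fun k => Z k ω) j
            then ∑ j, Φ (Z i ω).1 j * γ j else 0) := h
      _ = ∑ i, auxH N d Φ B γ (fun k => Z ((Equiv.swap i (Fin.last N)) k) ω) :=
          (Finset.sum_congr rfl fun i _ => (hHe i ω)).symm
  have hintA : (1 - α) * ((N + 1 : ℝ) * ∫ ω, auxF N d Φ γ (fun k => Z k ω) ∂P)
      ≤ (N + 1 : ℝ) * ∫ ω, auxH N d Φ B γ (fun k => Z k ω) ∂P := by
    have hintF : ∀ i : Fin (N + 1),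
        Integrable (fun ω => auxF N d Φ γ (fun k => Z ((Equiv.swap i (Fin.last N)) k) ω)) P :=
      fun i => key_intble _ hFm hFW_int _
    have hintH : ∀ i : Fin (N + 1),
        Integrable (fun ω => auxH N d Φ B γ (fun k => Z ((Equiv.swap i (Fin.last N)) k) ω)) P :=
      fun i => key_intble _ hHm hHW_int _
    have hmono := integral_mono
      (((integrable_finset_sum Finset.univ fun i _ => hintF i).const_mul (1 - α)))
      (integrable_finset_sum Finset.univ fun i _ => hintH i)
      hptA
    rw [integral_const_mul, integral_finset_sum _ fun i _ => hintF i,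
      integral_finset_sum _ fun i _ => hintH i] at hmono
    have e1 : ∀ i : Fin (N + 1),
        ∫ ω, auxF N d Φ γ (fun k => Z ((Equiv.swap i (Fin.last N)) k) ω) ∂P
          = ∫ ω, auxF N d Φ γ (fun k => Z k ω) ∂P := fun i => key_int _ hFm _
    have e2 : ∀ i : Fin (N + 1),
        ∫ ω, auxH N d Φ B γ (fun k => Z ((Equiv.swap i (Fin.last N)) k) ω) ∂P
          = ∫ ω, auxH N d Φ B γ (fun k => Z k ω) ∂P := fun i => key_int _ hHm _
    rw [Finset.sum_congr rfl fun i _ => e1 i, Finset.sum_congr rfl fun i _ => e2 i,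
      Finset.sum_const, Finset.sum_const, Finset.card_univ, Fintype.card_fin,
      nsmul_eq_mul, nsmul_eq_mul] at hmono
    push_cast at hmono ⊢
    linarith
  -- Step B: from the B-event to the threshold event
  have hptB : ∀ ω, auxH N d Φ B γ (fun k => Z k ω)
      ≤ (if (Z (Fin.last N) ω).2 ≤
            cfcThreshold N d Φ B (fun i : Fin N => Z i.castSucc ω) (Z (Fin.last N) ω).1
          then ∑ j, Φ (Z (Fin.last N) ω).1 j * γ j else 0) := by
    intro ω
    by_cases h : (Z (Fin.last N) ω).2 ≤ ∑ j, Φ (Z (Fin.last N) ω).1 j * B (fun k => Z k ω) j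
    · have hsnoc : (Fin.snoc (fun i : Fin N => Z i.castSucc ω)
          ((Z (Fin.last N) ω).1, (Z (Fin.last N) ω).2) : Fin (N + 1) → 𝓧 × ℝ)
          = fun k => Z k ω := by
        funext k
        induction k using Fin.lastCases with
        | last => simp
        | cast j => simp
      have hthr : (Z (Fin.last N) ω).2 ≤
          cfcThreshold N d Φ B (fun i : Fin N => Z i.castSucc ω) (Z (Fin.last N) ω).1 := by
        apply le_cfcThreshold Φ B _ _ _ (hZrange (Fin.last N) ω)
        rw [hsnoc]
        exact h
      rw [if_pos hthr]
      simp only [auxH, auxF]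
      rw [if_pos h]
    · simp only [auxH]
      rw [if_neg h]
      split_ifs
      · exact hf_nonneg _
      · exact le_refl 0
  have hg0_int : Integrable (fun ω => (if (Z (Fin.last N) ω).2 ≤
        cfcThreshold N d Φ B (fun i : Fin N => Z i.castSucc ω) (Z (Fin.last N) ω).1
      then ∑ j, Φ (Z (Fin.last N) ω).1 j * γ j else 0)) P := by
    refine hf_int.mono' ?_ (ae_of_all _ fun ω => ?_)
    · exact (Measurable.ite hev (hFm.comp hWm) measurable_const).aestronglyMeasurable
    · simp only [Real.norm_eq_abs]
      split_ifs with h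
      · exact le_of_eq (abs_of_nonneg (hf_nonneg _))
      · simpa using hf_nonneg (Z (Fin.last N) ω).1
  have hintB : ∫ ω, auxH N d Φ B γ (fun k => Z k ω) ∂P ≤
      ∫ ω, (if (Z (Fin.last N) ω).2 ≤
          cfcThreshold N d Φ B (fun i : Fin N => Z i.castSucc ω) (Z (Fin.last N) ω).1
        then ∑ j, Φ (Z (Fin.last N) ω).1 j * γ j else 0) ∂P :=
    integral_mono hHW_int hg0_int hptB
  have hmain : (1 - α) * ∫ ω, ∑ j, Φ (Z (Fin.last N) ω).1 j * γ j ∂P ≤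
      ∫ ω, (if (Z (Fin.last N) ω).2 ≤
          cfcThreshold N d Φ B (fun i : Fin N => Z i.castSucc ω) (Z (Fin.last N) ω).1
        then ∑ j, Φ (Z (Fin.last N) ω).1 j * γ j else 0) ∂P := by
    have hN1 : (0:ℝ) < (N + 1 : ℝ) := by positivity
    have hJ : ∫ ω, auxF N d Φ γ (fun k => Z k ω) ∂P
        = ∫ ω, ∑ j, Φ (Z (Fin.last N) ω).1 j * γ j ∂P := rfl
    rw [hJ] at hintA
    nlinarith [hintA, hintB]
  refine ⟨hmain, ?_⟩
  rw [le_div_iff₀ hf_pos]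
  linarith [hmain]
end

section
/- Stability of minimizers of strongly convex functions under Lipschitz perturbation (stability core of Theorem 2): Let E be a real inner product space, μ > 0 and L ≥ 0. Let f, g : E → ℝ be μ-strongly convex, meaning that x ↦ f(x) − (μ/2)‖x‖² and x ↦ g(x) − (μ/2)‖x‖² are convex, suppose the difference f − g is L-Lipschitz on E, and let x* be a global minimizer of f and y* a global minimizer of g. Then ‖x* − y*‖ ≤ L/μ. -/
/-!
A `μ`-strongly convex function grows at least quadratically away from its minimizer:
`f x* + μ/2 ‖y - x*‖² ≤ f y`. Adding this for `f` at `y*` and for `g` at `x*` gives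
`μ ‖x* - y*‖² ≤ (f - g) y* - (f - g) x* ≤ L ‖x* - y*‖`.
-/

open Set Filter Topology

section StrongConvexOn

variable {E : Type*} [NormedAddCommGroup E] [NormedSpace ℝ E] {s : Set E} {m : ℝ} {f : E → ℝ}
  {x y : E}

lemma StrongConvexOn.mul_sq_norm_sub_le_sub_of_isMinOn_of_mem_Ioo (hf : StrongConvexOn s m f)
    (hmin : IsMinOn f s x) (hx : x ∈ s) (hy : y ∈ s) {t : ℝ} (ht : t ∈ Ioo (0 : ℝ) 1) :
    t * (m / 2 * ‖y - x‖ ^ 2) ≤ f y - f x := by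
  obtain ⟨ht₀, ht₁⟩ := ht
  have hconv := hf.2 hx hy ht₀.le (sub_nonneg.2 ht₁.le) (add_sub_cancel t 1)
  have hmin' : f x ≤ f (t • x + (1 - t) • y) := hmin (hf.1 hx hy ht₀.le (by linarith) (by ring))
  rw [smul_eq_mul, smul_eq_mul, norm_sub_rev] at hconv
  have : (1 - t) * (t * (m / 2 * ‖y - x‖ ^ 2)) ≤ (1 - t) * (f y - f x) := by nlinarith
  exact le_of_mul_le_mul_left this (sub_pos.2 ht₁)

lemma StrongConvexOn.add_mul_sq_norm_sub_le_of_isMinOn (hf : StrongConvexOn s m f)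
    (hmin : IsMinOn f s x) (hx : x ∈ s) (hy : y ∈ s) :
    f x + m / 2 * ‖y - x‖ ^ 2 ≤ f y := by
  have hlim : Tendsto (fun t : ℝ ↦ t * (m / 2 * ‖y - x‖ ^ 2)) (𝓝[<] 1)
      (𝓝 (m / 2 * ‖y - x‖ ^ 2)) :=
    ((continuous_mul_const _).tendsto' 1 _ (one_mul _)).mono_left nhdsWithin_le_nhds
  have hev : ∀ᶠ t in 𝓝[<] (1 : ℝ), t * (m / 2 * ‖y - x‖ ^ 2) ≤ f y - f x :=
    eventually_of_mem (Ioo_mem_nhdsLT zero_lt_one) fun t ht ↦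
      hf.mul_sq_norm_sub_le_sub_of_isMinOn_of_mem_Ioo hmin hx hy ht
  linarith [le_of_tendsto hlim hev]

end StrongConvexOn

/-- **Stability of minimizers of strongly convex functions under Lipschitz perturbation.**
If `f` and `g` are `μ`-strongly convex on a real inner product space, `f - g` is
`L`-Lipschitz, and `x*`, `y*` are global minimizers of `f`, `g` respectively, then
`‖x* - y*‖ ≤ L/μ`. -/
theorem strongly_convex_minimizer_stability
    {E : Type*} [NormedAddCommGroup E] [InnerProductSpace ℝ E]
    (μ L : ℝ) (hμ : 0 < μ) (hL : 0 ≤ L)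
    (f g : E → ℝ)
    (hf : ConvexOn ℝ Set.univ fun x => f x - μ / 2 * ‖x‖ ^ 2)
    (hg : ConvexOn ℝ Set.univ fun x => g x - μ / 2 * ‖x‖ ^ 2)
    (hLip : ∀ x y : E, |(f x - g x) - (f y - g y)| ≤ L * ‖x - y‖)
    (xStar yStar : E)
    (hx : ∀ x, f xStar ≤ f x) (hy : ∀ y, g yStar ≤ g y) :
    ‖xStar - yStar‖ ≤ L / μ := by
  have hf_growth := (strongConvexOn_iff_convex.2 hf).add_mul_sq_norm_sub_le_of_isMinOn
    (fun x _ ↦ hx x) (mem_univ xStar) (mem_univ yStar)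
  have hg_growth := (strongConvexOn_iff_convex.2 hg).add_mul_sq_norm_sub_le_of_isMinOn
    (fun y _ ↦ hy y) (mem_univ yStar) (mem_univ xStar)
  have hdiff := (le_abs_self _).trans (hLip yStar xStar)
  rw [norm_sub_rev] at hf_growth hdiff
  have key : μ * ‖xStar - yStar‖ ^ 2 ≤ L * ‖xStar - yStar‖ := by linarith
  rcases (norm_nonneg (xStar - yStar)).eq_or_lt with hd | hd
  · rw [← hd]
    positivity
  · rw [le_div_iff₀ hμ]
    nlinarith
end

section
/- One-point replacement stability of ridge-regularized empirical risk minimization (the O(1/N) stability bound in the proof of Theorem 2): Let d ≥ 1, n ≥ 1, R ≥ 0, λ > 0, fix k ∈ {1, …, n}, and let f_1, …, f_n and f_k' : ℝ^d → ℝ be convex and R-Lipschitz with respect to the Euclidean norm. Define F(β) := (1/n)·Σ_{i=1}^n f_i(β) + (λ/2)‖β‖₂² and F'(β) := F(β) − (1/n)·f_k(β) + (1/n)·f_k'(β). Then F and F' have unique global minimizers β* and β*', and ‖β* − β*'‖₂ ≤ 2R/(λ·n). -/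
open Finset

set_option linter.unusedSectionVars false
set_option linter.unusedVariables false
set_option maxHeartbeats 1000000

variable {E : Type*} [NormedAddCommGroup E] [InnerProductSpace ℝ E] [ProperSpace E]

/-- continuity from a Lipschitz-type bound -/
lemma lip_continuous {g : E → ℝ} {R : ℝ}
    (hg : ∀ x y, |g x - g y| ≤ R * ‖x - y‖) : Continuous g := by
  have : LipschitzWith (Real.toNNReal R) g := by
    apply LipschitzWith.of_dist_le_mul
    intro x y
    have := hg x y
    rw [Real.dist_eq, dist_eq_norm]
    calc |g x - g y| ≤ R * ‖x - y‖ := this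
    _ ≤ (Real.toNNReal R) * ‖x - y‖ := by
        gcongr; exact Real.le_coe_toNNReal R
  exact this.continuous

/-- strong convexity of the ridge objective -/
lemma strong_ridge {g : E → ℝ} {lam : ℝ} (hg : ConvexOn ℝ Set.univ g) :
    StrongConvexOn Set.univ lam (fun x => g x + lam / 2 * ‖x‖ ^ 2) := by
  rw [strongConvexOn_iff_convex]
  convert hg using 2 with x
  ring

/-- minimizer gap inequality for strongly convex function -/
lemma strong_min_gap {G : E → ℝ} {m : ℝ} (hm : 0 < m)
    (hG : StrongConvexOn Set.univ m G) {b : E} (hb : ∀ z, G b ≤ G z) (z : E) :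
    G b + m / 2 * ‖z - b‖ ^ 2 ≤ G z := by
  have key : ∀ t : ℝ, 0 < t → t ≤ 1 → m / 2 * (1 - t) * ‖z - b‖ ^ 2 ≤ G z - G b := by
    intro t ht ht1
    have h := hG.2 (Set.mem_univ z) (Set.mem_univ b) ht.le (by linarith : (0:ℝ) ≤ 1 - t)
      (by ring)
    have hmin := hb (t • z + (1 - t) • b)
    have : G b ≤ t * G z + (1 - t) * G b - t * (1 - t) * (m / 2 * ‖z - b‖ ^ 2) := by
      calc G b ≤ G (t • z + (1 - t) • b) := hmin
      _ ≤ t • G z + (1 - t) • G b - t * (1 - t) * (m / 2 * ‖z - b‖ ^ 2) := h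
      _ = t * G z + (1 - t) * G b - t * (1 - t) * (m / 2 * ‖z - b‖ ^ 2) := by
          simp [smul_eq_mul]
    nlinarith
  have hlim : Filter.Tendsto (fun t : ℝ => m / 2 * (1 - t) * ‖z - b‖ ^ 2)
      (nhdsWithin 0 (Set.Ioi 0)) (nhds (m / 2 * ‖z - b‖ ^ 2)) := by
    have : Filter.Tendsto (fun t : ℝ => m / 2 * (1 - t) * ‖z - b‖ ^ 2)
        (nhds 0) (nhds (m / 2 * (1 - 0) * ‖z - b‖ ^ 2)) := by
      apply Continuous.tendsto
      continuity
    simpa using this.mono_left nhdsWithin_le_nhds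
  have : m / 2 * ‖z - b‖ ^ 2 ≤ G z - G b := by
    apply le_of_tendsto hlim
    filter_upwards [Ioc_mem_nhdsGT_of_mem (Set.mem_Ico.mpr ⟨le_refl 0, one_pos⟩)] with t ht
    exact key t ht.1 ht.2
  linarith

/-- existence & uniqueness of minimizer -/
lemma ridge_min_exists {g : E → ℝ} {R lam : ℝ} (hR : 0 ≤ R) (hlam : 0 < lam)
    (hg : ConvexOn ℝ Set.univ g) (hLip : ∀ x y, |g x - g y| ≤ R * ‖x - y‖) :
    ∃! b : E, ∀ z, (g b + lam / 2 * ‖b‖ ^ 2) ≤ (g z + lam / 2 * ‖z‖ ^ 2) := by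
  set G : E → ℝ := fun x => g x + lam / 2 * ‖x‖ ^ 2 with hGdef
  have hGcont : Continuous G := by
    apply ((lip_continuous hLip)).add
    continuity
  have hρ0 : (0:ℝ) < 2 * R / lam + 1 := by positivity
  obtain ⟨b, hbmem, hbmin⟩ := (isCompact_closedBall (0 : E) (2 * R / lam + 1)).exists_isMinOn
    ⟨0, by simp [hρ0.le]⟩ hGcont.continuousOn
  have hglob : ∀ z, G b ≤ G z := by
    intro z
    by_cases hz : z ∈ Metric.closedBall (0 : E) (2 * R / lam + 1)
    · exact hbmin hz
    · have hznorm : 2 * R / lam + 1 < ‖z‖ := by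
        simpa [Metric.mem_closedBall, dist_zero_right] using hz
      have h1 : g 0 - R * ‖z‖ ≤ g z := by
        have := (abs_le.mp (hLip 0 z)).2
        have hn : ‖(0:E) - z‖ = ‖z‖ := by simp
        rw [hn] at this
        linarith
      have h2 : G 0 < G z := by
        have hzn : 2 * R / lam < ‖z‖ := by linarith
        rw [div_lt_iff₀ hlam] at hzn
        have : 2 * R < lam * ‖z‖ := by linarith
        have hz0 : 0 < ‖z‖ := lt_of_le_of_lt (by positivity) hznorm
        have hq : R * ‖z‖ < lam / 2 * ‖z‖ ^ 2 := by nlinarith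
        simp only [hGdef, norm_zero]
        calc g 0 + lam / 2 * (0:ℝ) ^ 2 = g 0 := by ring
        _ < g z + lam / 2 * ‖z‖ ^ 2 := by linarith
      exact le_of_lt (lt_of_le_of_lt (hbmin (by simp [hρ0.le])) h2)
  refine ⟨b, hglob, ?_⟩
  intro c hc
  have hs := strong_ridge (lam := lam) hg
  have h1 := strong_min_gap hlam hs hglob c
  have h2 := hc b
  have : ‖c - b‖ ^ 2 ≤ 0 := by
    have : lam / 2 * ‖c - b‖ ^ 2 ≤ 0 := by
      linarith
    nlinarith
  have : ‖c - b‖ = 0 := by nlinarith [norm_nonneg (c - b), sq_nonneg (‖c - b‖)]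
  have := norm_eq_zero.mp this
  exact sub_eq_zero.mp this


omit [InnerProductSpace ℝ E] [ProperSpace E] in
lemma convexOn_finset_sum {ι : Type*} (t : Finset ι) [NormedSpace ℝ E] (f : ι → E → ℝ)
    (h : ∀ i ∈ t, ConvexOn ℝ Set.univ (f i)) :
    ConvexOn ℝ Set.univ (fun x => ∑ i ∈ t, f i x) := by
  classical
  induction t using Finset.induction with
  | empty => simpa using convexOn_const (0:ℝ) convex_univ
  | insert a s hx ih =>
    simp only [Finset.sum_insert hx]
    exact (h a (Finset.mem_insert_self a s)).add
      (ih (fun i hi => h i (Finset.mem_insert_of_mem hi)))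

/-- The ridge-regularized empirical risk
`F(β) = (1/n) Σ_i f_i(β) + (λ/2) ‖β‖₂²`. -/
noncomputable def ridgeObj {n d : ℕ} (f : Fin n → EuclideanSpace ℝ (Fin d) → ℝ)
    (lam : ℝ) (β : EuclideanSpace ℝ (Fin d)) : ℝ :=
  (1 / (n : ℝ)) * ∑ i, f i β + lam / 2 * ‖β‖ ^ 2

/-- **One-point replacement stability of ridge-regularized ERM (O(1/N) bound in Thm 2).**
If the losses are convex and `R`-Lipschitz, then the ridge objectives before and after
replacing the `k`-th loss each have a unique global minimizer, and these minimizers are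
at Euclidean distance at most `2R/(λn)`. -/
theorem ridge_erm_replace_one_stability
    (d n : ℕ) (hd : 1 ≤ d) (hn : 1 ≤ n)
    (R lam : ℝ) (hR : 0 ≤ R) (hlam : 0 < lam)
    (k : Fin n)
    (f : Fin n → EuclideanSpace ℝ (Fin d) → ℝ)
    (f' : EuclideanSpace ℝ (Fin d) → ℝ)
    (hconv : ∀ i, ConvexOn ℝ Set.univ (f i))
    (hconv' : ConvexOn ℝ Set.univ f')
    (hLip : ∀ i, ∀ x y : EuclideanSpace ℝ (Fin d), |f i x - f i y| ≤ R * ‖x - y‖)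
    (hLip' : ∀ x y : EuclideanSpace ℝ (Fin d), |f' x - f' y| ≤ R * ‖x - y‖) :
    (∃! b : EuclideanSpace ℝ (Fin d), ∀ z, ridgeObj f lam b ≤ ridgeObj f lam z) ∧
    (∃! b' : EuclideanSpace ℝ (Fin d), ∀ z,
      (ridgeObj f lam b' - (1 / (n : ℝ)) * f k b' + (1 / (n : ℝ)) * f' b') ≤
        (ridgeObj f lam z - (1 / (n : ℝ)) * f k z + (1 / (n : ℝ)) * f' z)) ∧
    ∀ b b' : EuclideanSpace ℝ (Fin d),
      (∀ z, ridgeObj f lam b ≤ ridgeObj f lam z) →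
      (∀ z, (ridgeObj f lam b' - (1 / (n : ℝ)) * f k b' + (1 / (n : ℝ)) * f' b') ≤
        (ridgeObj f lam z - (1 / (n : ℝ)) * f k z + (1 / (n : ℝ)) * f' z)) →
      ‖b - b'‖ ≤ 2 * R / (lam * n) := by
  classical
  have hn0 : (0:ℝ) < (n:ℝ) := by exact_mod_cast hn
  set g₁ : EuclideanSpace ℝ (Fin d) → ℝ := fun x => (1 / (n : ℝ)) * ∑ i, f i x with hg1def
  set g₂ : EuclideanSpace ℝ (Fin d) → ℝ := fun x => g₁ x - (1 / (n : ℝ)) * f k x + (1 / (n : ℝ)) * f' x with hg2def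
  -- convexity of g₁
  have hg1conv : ConvexOn ℝ Set.univ g₁ := by
    have := (convexOn_finset_sum (E := EuclideanSpace ℝ (Fin d)) Finset.univ f (fun i _ => hconv i)).smul
      (by positivity : (0:ℝ) ≤ 1 / (n:ℝ))
    simpa [hg1def, smul_eq_mul] using this
  -- g₂ rewritten as a scaled sum over erase k plus f'
  have hg2eq : ∀ x : EuclideanSpace ℝ (Fin d), g₂ x = (1 / (n : ℝ)) * ((∑ i ∈ Finset.univ.erase k, f i x) + f' x) := by
    intro x
    have hsum : ∑ i, f i x = f k x + ∑ i ∈ Finset.univ.erase k, f i x :=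
      (Finset.add_sum_erase _ _ (Finset.mem_univ k)).symm
    simp only [hg2def, hg1def, hsum]
    ring
  have hg2conv : ConvexOn ℝ Set.univ g₂ := by
    have hbase : ConvexOn ℝ Set.univ
        (fun x => (∑ i ∈ Finset.univ.erase k, f i x) + f' x) :=
      (convexOn_finset_sum (E := EuclideanSpace ℝ (Fin d)) _ f (fun i _ => hconv i)).add hconv'
    have := hbase.smul (by positivity : (0:ℝ) ≤ 1 / (n:ℝ))
    have h2 : ConvexOn ℝ Set.univ
        (fun x => (1 / (n : ℝ)) * ((∑ i ∈ Finset.univ.erase k, f i x) + f' x)) := by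
      simpa [smul_eq_mul] using this
    have : g₂ = fun x => (1 / (n : ℝ)) * ((∑ i ∈ Finset.univ.erase k, f i x) + f' x) :=
      funext hg2eq
    rw [this]; exact h2
  -- Lipschitz bounds
  have hg1lip : ∀ x y : EuclideanSpace ℝ (Fin d), |g₁ x - g₁ y| ≤ R * ‖x - y‖ := by
    intro x y
    have h1 : g₁ x - g₁ y = (1 / (n:ℝ)) * ∑ i, (f i x - f i y) := by
      simp only [hg1def, Finset.sum_sub_distrib]; ring
    rw [h1, abs_mul, abs_of_nonneg (by positivity : (0:ℝ) ≤ 1 / (n:ℝ))]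
    have h2 : |∑ i, (f i x - f i y)| ≤ ∑ i : Fin n, R * ‖x - y‖ :=
      (Finset.abs_sum_le_sum_abs _ _).trans
        (Finset.sum_le_sum (fun i _ => hLip i x y))
    have h3 : ∑ _i : Fin n, R * ‖x - y‖ = (n:ℝ) * (R * ‖x - y‖) := by
      simp [Finset.sum_const, mul_comm]
    calc (1 / (n:ℝ)) * |∑ i, (f i x - f i y)| ≤ (1 / (n:ℝ)) * ((n:ℝ) * (R * ‖x - y‖)) := by
          rw [← h3]; exact mul_le_mul_of_nonneg_left h2 (by positivity)
      _ = R * ‖x - y‖ := by field_simp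
  have hg2lip : ∀ x y : EuclideanSpace ℝ (Fin d), |g₂ x - g₂ y| ≤ R * ‖x - y‖ := by
    intro x y
    rw [hg2eq x, hg2eq y]
    have h1 : (1 / (n:ℝ)) * ((∑ i ∈ Finset.univ.erase k, f i x) + f' x)
        - (1 / (n:ℝ)) * ((∑ i ∈ Finset.univ.erase k, f i y) + f' y)
        = (1 / (n:ℝ)) * ((∑ i ∈ Finset.univ.erase k, (f i x - f i y)) + (f' x - f' y)) := by
      rw [Finset.sum_sub_distrib]; ring
    rw [h1, abs_mul, abs_of_nonneg (by positivity : (0:ℝ) ≤ 1 / (n:ℝ))]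
    have h2 : |(∑ i ∈ Finset.univ.erase k, (f i x - f i y)) + (f' x - f' y)|
        ≤ (∑ _i ∈ Finset.univ.erase k, R * ‖x - y‖) + R * ‖x - y‖ := by
      refine (abs_add_le _ _).trans (add_le_add ?_ (hLip' x y))
      exact (Finset.abs_sum_le_sum_abs _ _).trans
        (Finset.sum_le_sum (fun i _ => hLip i x y))
    have hcard : ((Finset.univ.erase k).card : ℝ) = (n:ℝ) - 1 := by
      rw [Finset.card_erase_of_mem (Finset.mem_univ k)]
      simp [Finset.card_univ]
      have : 1 ≤ n := hn
      push_cast [Nat.cast_sub this]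
      ring
    have h3 : (∑ _i ∈ Finset.univ.erase k, R * ‖x - y‖) + R * ‖x - y‖
        = (n:ℝ) * (R * ‖x - y‖) := by
      rw [Finset.sum_const, nsmul_eq_mul, hcard]; ring
    calc (1 / (n:ℝ)) * |(∑ i ∈ Finset.univ.erase k, (f i x - f i y)) + (f' x - f' y)|
        ≤ (1 / (n:ℝ)) * ((n:ℝ) * (R * ‖x - y‖)) := by
          rw [← h3]; exact mul_le_mul_of_nonneg_left h2 (by positivity)
      _ = R * ‖x - y‖ := by field_simp
  -- objectives
  have hF1 : ∀ w : EuclideanSpace ℝ (Fin d), ridgeObj f lam w = g₁ w + lam / 2 * ‖w‖ ^ 2 := fun w => rfl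
  have hF2 : ∀ w : EuclideanSpace ℝ (Fin d), ridgeObj f lam w - (1 / (n : ℝ)) * f k w + (1 / (n : ℝ)) * f' w
      = g₂ w + lam / 2 * ‖w‖ ^ 2 := by
    intro w; simp only [ridgeObj, hg2def, hg1def]; ring
  have hEU1 := ridge_min_exists (E := EuclideanSpace ℝ (Fin d)) hR hlam hg1conv hg1lip
  have hEU2 := ridge_min_exists (E := EuclideanSpace ℝ (Fin d)) hR hlam hg2conv hg2lip
  refine ⟨by simpa only [hF1] using hEU1, by simpa only [hF2] using hEU2, ?_⟩
  intro b b' hb hb'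
  simp only [hF1] at hb
  simp only [hF2] at hb'
  have hs1 := strong_min_gap hlam (strong_ridge (lam := lam) hg1conv) hb b'
  have hs2 := strong_min_gap hlam (strong_ridge (lam := lam) hg2conv) hb' b
  have hnorm : ‖b' - b‖ = ‖b - b'‖ := norm_sub_rev _ _
  rw [hnorm] at hs1
  -- difference bound
  have hfk := abs_le.mp (hLip k b' b)
  have hf' := abs_le.mp (hLip' b b')
  have hnorm2 : ‖b' - b‖ = ‖b - b'‖ := norm_sub_rev _ _
  rw [hnorm2] at hfk
  have hkey : lam * ‖b - b'‖ ^ 2 ≤ (2 * R / (n:ℝ)) * ‖b - b'‖ := by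
    have hdiff : (g₁ b' + lam / 2 * ‖b'‖ ^ 2) - (g₁ b + lam / 2 * ‖b‖ ^ 2)
        + ((g₂ b + lam / 2 * ‖b‖ ^ 2) - (g₂ b' + lam / 2 * ‖b'‖ ^ 2))
        = (1 / (n:ℝ)) * ((f k b' - f k b) + (f' b - f' b')) := by
      simp only [hg2def]; ring
    have hbound : (1 / (n:ℝ)) * ((f k b' - f k b) + (f' b - f' b'))
        ≤ (2 * R / (n:ℝ)) * ‖b - b'‖ := by
      have h1 : f k b' - f k b ≤ R * ‖b - b'‖ := hfk.2
      have h2 : f' b - f' b' ≤ R * ‖b - b'‖ := hf'.2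
      have h3 : (f k b' - f k b) + (f' b - f' b') ≤ 2 * R * ‖b - b'‖ := by linarith
      calc (1 / (n:ℝ)) * ((f k b' - f k b) + (f' b - f' b'))
          ≤ (1 / (n:ℝ)) * (2 * R * ‖b - b'‖) := by
            exact mul_le_mul_of_nonneg_left h3 (by positivity)
        _ = (2 * R / (n:ℝ)) * ‖b - b'‖ := by ring
    nlinarith [hs1, hs2, hdiff, hbound]
  by_cases h0 : ‖b - b'‖ = 0
  · rw [h0]; positivity
  · have hpos : 0 < ‖b - b'‖ := lt_of_le_of_ne (norm_nonneg _) (Ne.symm h0)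
    rw [le_div_iff₀ (by positivity : (0:ℝ) < lam * (n:ℝ))]
    have hkey' : lam * ‖b - b'‖ ^ 2 * (n:ℝ) ≤ 2 * R * ‖b - b'‖ := by
      have := mul_le_mul_of_nonneg_right hkey hn0.le
      calc lam * ‖b - b'‖ ^ 2 * (n:ℝ) ≤ (2 * R / (n:ℝ) * ‖b - b'‖) * (n:ℝ) := this
        _ = 2 * R * ‖b - b'‖ := by field_simp
    nlinarith [hkey', hpos]
end

section
/- Lipschitz stability of the fixed-point threshold map (precise form of the threshold-stability claim in the proof of Theorem 2): Let c > 0 and ε ≥ 0, and let g, g' : [0,1] → ℝ be continuous with g(0) ≥ 0 and g'(0) ≥ 0. Suppose both g and g' satisfy the c-decrease condition: for all 0 ≤ s' ≤ s ≤ 1, g(s) − s ≤ (g(s') − s') − c·(s − s') (and likewise with g' in place of g). Define λ(g) := sup{s ∈ [0,1] : s ≤ g(s)} and λ(g') := sup{s ∈ [0,1] : s ≤ g'(s)}. If sup_{s ∈ [0,1]} |g(s) − g'(s)| ≤ ε, then |λ(g) − λ(g')| ≤ ε/c. -/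
open Set

/-- The fixed-point threshold `λ(g) := sup {s ∈ [0,1] : s ≤ g s}`. -/
noncomputable def fpThreshold (g : ℝ → ℝ) : ℝ :=
  sSup {s : ℝ | s ∈ Set.Icc (0 : ℝ) 1 ∧ s ≤ g s}

lemma fpThreshold_mem (g : ℝ → ℝ) (hg_cont : ContinuousOn g (Icc 0 1)) (hg0 : 0 ≤ g 0) :
    fpThreshold g ∈ {s : ℝ | s ∈ Set.Icc (0 : ℝ) 1 ∧ s ≤ g s} := by
  have hset : {s : ℝ | s ∈ Set.Icc (0 : ℝ) 1 ∧ s ≤ g s}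
      = Icc (0:ℝ) 1 ∩ (fun s => g s - s) ⁻¹' (Ici 0) := by
    ext s; simp [sub_nonneg, and_comm]
  have hclosed : IsClosed {s : ℝ | s ∈ Set.Icc (0 : ℝ) 1 ∧ s ≤ g s} := by
    rw [hset]
    exact ContinuousOn.preimage_isClosed_of_isClosed
      (hg_cont.sub continuousOn_id) isClosed_Icc isClosed_Ici
  have hne : {s : ℝ | s ∈ Set.Icc (0 : ℝ) 1 ∧ s ≤ g s}.Nonempty :=
    ⟨0, ⟨⟨le_refl 0, zero_le_one⟩, hg0⟩⟩
  have hbdd : BddAbove {s : ℝ | s ∈ Set.Icc (0 : ℝ) 1 ∧ s ≤ g s} :=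
    ⟨1, fun x hx => hx.1.2⟩
  exact hclosed.csSup_mem hne hbdd

lemma fpThreshold_one_side
    (c ε : ℝ) (hc : 0 < c) (hε : 0 ≤ ε)
    (g g' : ℝ → ℝ)
    (hg_cont : ContinuousOn g (Icc 0 1))
    (hg0 : 0 ≤ g 0) (hg'0 : 0 ≤ g' 0)
    (hg'_dec : ∀ s' s : ℝ, 0 ≤ s' → s' ≤ s → s ≤ 1 →
      g' s - s ≤ (g' s' - s') - c * (s - s'))
    (hclose : ∀ s ∈ Icc (0 : ℝ) 1, |g s - g' s| ≤ ε) :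
    fpThreshold g ≤ fpThreshold g' + ε / c := by
  obtain ⟨⟨ht0, ht1⟩, htg⟩ := fpThreshold_mem g hg_cont hg0
  set t := fpThreshold g with ht
  clear_value t
  have hεc : 0 ≤ ε / c := div_nonneg hε hc.le
  by_cases hle : t ≤ ε / c
  · have : 0 ≤ fpThreshold g' :=
      le_csSup ⟨1, fun x hx => hx.1.2⟩ ⟨⟨le_refl 0, zero_le_one⟩, hg'0⟩
    linarith
  · push_neg at hle
    obtain ⟨s, hs⟩ : ∃ s, s = t - ε / c := ⟨_, rfl⟩
    have hs0 : 0 ≤ s := by simp [hs]; linarith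
    have hst : s ≤ t := by simp [hs]; linarith
    have hdec := hg'_dec s t hs0 hst ht1
    have hts : t - s = ε / c := by simp [hs]
    have hcs : c * (t - s) = ε := by
      rw [hts]; field_simp
    have hg't : t - ε ≤ g' t := by
      have := hclose t ⟨ht0, ht1⟩
      have := abs_le.mp this
      linarith
    have hsg' : s ≤ g' s := by
      have : g' t - t ≤ (g' s - s) - ε := by rw [← hcs]; exact hdec
      linarith
    have : s ≤ fpThreshold g' :=
      le_csSup ⟨1, fun x hx => hx.1.2⟩ ⟨⟨hs0, hst.trans ht1⟩, hsg'⟩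
    linarith

/-- **Lipschitz stability of the fixed-point threshold map (Theorem 2, threshold step).**
If `g` and `g'` are continuous on `[0,1]`, nonnegative at `0`, both satisfy the
`c`-decrease condition, and are uniformly `ε`-close on `[0,1]`, then their fixed-point
thresholds differ by at most `ε/c`. -/
theorem fixed_point_threshold_stability
    (c ε : ℝ) (hc : 0 < c) (hε : 0 ≤ ε)
    (g g' : ℝ → ℝ)
    (hg_cont : ContinuousOn g (Icc 0 1)) (hg'_cont : ContinuousOn g' (Icc 0 1))
    (hg0 : 0 ≤ g 0) (hg'0 : 0 ≤ g' 0)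
    (hg_dec : ∀ s' s : ℝ, 0 ≤ s' → s' ≤ s → s ≤ 1 →
      g s - s ≤ (g s' - s') - c * (s - s'))
    (hg'_dec : ∀ s' s : ℝ, 0 ≤ s' → s' ≤ s → s ≤ 1 →
      g' s - s ≤ (g' s' - s') - c * (s - s'))
    (hclose : ∀ s ∈ Icc (0 : ℝ) 1, |g s - g' s| ≤ ε) :
    |fpThreshold g - fpThreshold g'| ≤ ε / c := by
  rw [abs_sub_le_iff]
  constructor
  · have := fpThreshold_one_side c ε hc hε g g' hg_cont hg0 hg'0 hg'_dec hclose
    linarith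
  · have := fpThreshold_one_side c ε hc hε g' g hg'_cont hg'0 hg0 hg_dec
      (fun s hs => by rw [abs_sub_comm]; exact hclose s hs)
    linarith
end
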